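/- arXiv:1512.03085 — 8 statements merged into one kernel-verified Lean document; each statement's English description precedes it below -/
import Mathlib

section
/- Let m ≥ 2 and let φ ∈ RatFunc ℂ with deg φ := max(φ.num.natDegree, φ.denom.natDegree) ≥ 2. Then the following are equivalent: (i) for every z ∈ ℂ with z ≠ 0, m divides Polynomial.rootMultiplicity z (φ.num * φ.denom); (ii) there exist c ∈ ℂ with c ≠ 0, a natural number j ≤ m − 1, and ψ ∈ RatFunc ℂ, such that φ = RatFunc.C c * RatFunc.X^j * ψ^m. -/
open Polynomial

noncomputable def myOrd (z : ℂ) (f : RatFunc ℂ) : ℤ :=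
  (rootMultiplicity z f.num : ℤ) - rootMultiplicity z f.denom

lemma myOrd_mul (z : ℂ) {f g : RatFunc ℂ} (hf : f ≠ 0) (hg : g ≠ 0) :
    myOrd z (f * g) = myOrd z f + myOrd z g := by
  have hfg : f * g ≠ 0 := mul_ne_zero hf hg
  have e : (algebraMap ℂ[X] (RatFunc ℂ)) (f * g).num / algebraMap ℂ[X] (RatFunc ℂ) (f * g).denom
      = algebraMap ℂ[X] (RatFunc ℂ) (f.num * g.num) / algebraMap ℂ[X] (RatFunc ℂ) (f.denom * g.denom) := by
    rw [RatFunc.num_div_denom, map_mul, map_mul, ← div_mul_div_comm,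
      RatFunc.num_div_denom, RatFunc.num_div_denom]
  rw [div_eq_div_iff (RatFunc.algebraMap_ne_zero (RatFunc.denom_ne_zero _))
    (RatFunc.algebraMap_ne_zero (mul_ne_zero (RatFunc.denom_ne_zero f) (RatFunc.denom_ne_zero g))),
    ← map_mul, ← map_mul] at e
  have key := RatFunc.algebraMap_injective (K := ℂ) e
  have h1 : rootMultiplicity z ((f * g).num * (f.denom * g.denom)) =
      rootMultiplicity z ((f.num * g.num) * (f * g).denom) := by rw [key]
  rw [rootMultiplicity_mul (mul_ne_zero (RatFunc.num_ne_zero hfg)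
      (mul_ne_zero (RatFunc.denom_ne_zero f) (RatFunc.denom_ne_zero g))),
    rootMultiplicity_mul (mul_ne_zero (RatFunc.denom_ne_zero f) (RatFunc.denom_ne_zero g)),
    rootMultiplicity_mul (mul_ne_zero (mul_ne_zero (RatFunc.num_ne_zero hf) (RatFunc.num_ne_zero hg))
      (RatFunc.denom_ne_zero _)),
    rootMultiplicity_mul (mul_ne_zero (RatFunc.num_ne_zero hf) (RatFunc.num_ne_zero hg))] at h1
  unfold myOrd
  omega

lemma myOrd_pow (z : ℂ) {f : RatFunc ℂ} (hf : f ≠ 0) (n : ℕ) :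
    myOrd z (f ^ n) = n * myOrd z f := by
  induction n with
  | zero =>
    simp [myOrd, pow_zero, RatFunc.num_one, RatFunc.denom_one]
  | succ n ih =>
    rw [pow_succ, myOrd_mul z (pow_ne_zero n hf) hf, ih]
    push_cast; ring

lemma myOrd_C (z : ℂ) {c : ℂ} (hc : c ≠ 0) : myOrd z (RatFunc.C c) = 0 := by
  unfold myOrd
  rw [RatFunc.num_C, RatFunc.denom_C,
    rootMultiplicity_eq_zero (by simp [IsRoot, hc]),
    rootMultiplicity_eq_zero (by simp [IsRoot])]
  simp

lemma myOrd_X {z : ℂ} (hz : z ≠ 0) : myOrd z RatFunc.X = 0 := by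
  unfold myOrd
  rw [RatFunc.num_X, RatFunc.denom_X,
    rootMultiplicity_eq_zero (by simp [IsRoot, hz]),
    rootMultiplicity_eq_zero (by simp [IsRoot])]
  simp

/-- Decomposition of a nonzero polynomial whose nonzero roots all have multiplicity
divisible by m. -/
lemma poly_decomp {p : ℂ[X]} (hp : p ≠ 0) {m : ℕ}
    (h : ∀ z : ℂ, z ≠ 0 → m ∣ rootMultiplicity z p) :
    ∃ (e : ℕ) (T : ℂ[X]), T ≠ 0 ∧
      p = Polynomial.C p.leadingCoeff * X ^ e * T ^ m := by
  classical
  have hcard : Multiset.card p.roots = p.natDegree :=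
    splits_iff_card_roots.mp (IsAlgClosed.splits p)
  have hrep := C_leadingCoeff_mul_prod_multiset_X_sub_C (p := p) hcard
  set s : Multiset ℂ := p.roots.filter (fun z => ¬ z = 0) with hs
  have hsplit : p.roots.filter (fun z => z = 0) + s = p.roots := Multiset.filter_add_not _ _
  have hdvd : ∀ a : ℂ, a ∈ s → m ∣ s.count a := by
    intro a ha
    rw [hs, Multiset.mem_filter] at ha
    rw [hs, Multiset.count_filter, if_pos ha.2, count_roots]
    exact h a ha.2
  obtain ⟨t, ht⟩ := Multiset.exists_smul_of_dvd_count s hdvd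
  refine ⟨p.roots.count 0, (t.map fun z => X - Polynomial.C z).prod, ?_, ?_⟩
  · refine Multiset.prod_ne_zero ?_
    intro h0
    rw [Multiset.mem_map] at h0
    obtain ⟨a, _, ha⟩ := h0
    exact X_sub_C_ne_zero a ha
  · conv_lhs => rw [← hrep]
    rw [← hsplit, Multiset.filter_eq', Multiset.map_add, Multiset.prod_add,
      Multiset.map_replicate, Multiset.prod_replicate, ht, Multiset.map_nsmul,
      Multiset.prod_nsmul]
    rw [Polynomial.C_0, sub_zero, mul_assoc]
    have hc0 : Multiset.count 0 (Multiset.replicate (Multiset.count 0 p.roots) 0 + m • t)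
        = Multiset.count 0 p.roots := by
      rw [Multiset.count_add, Multiset.count_replicate_self, ← ht, hs,
        Multiset.count_filter]
      simp
    rw [hc0]

lemma aux {K : Type*} [Field K] {a b y u : K} (x w t : K) (hb : b ≠ 0) (hy : y ≠ 0)
    (hu : u ≠ 0) : a * (x * w * y) * t / (b * y * u) = a / b * x * (w * (t / u)) := by
  field_simp



/-- Proposition 6.? ('triv') of the paper: φ is trivial with respect to {0, ∞} iff
φ = c·x^j·ψ(x)^m with 0 ≤ j ≤ m − 1. -/
theorem stmt_7 (m : ℕ) (hm : 2 ≤ m) (φ : RatFunc ℂ)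
    (hdeg : 2 ≤ max φ.num.natDegree φ.denom.natDegree) :
    (∀ z : ℂ, z ≠ 0 → m ∣ Polynomial.rootMultiplicity z (φ.num * φ.denom)) ↔
    (∃ c : ℂ, c ≠ 0 ∧ ∃ j : ℕ, j ≤ m - 1 ∧ ∃ ψ : RatFunc ℂ,
      φ = RatFunc.C c * RatFunc.X ^ j * ψ ^ m) := by
  have hm0 : (0 : ℤ) < m := by exact_mod_cast Nat.lt_of_lt_of_le two_pos hm
  have hφ : φ ≠ 0 := by
    intro h
    rw [h] at hdeg
    simp [RatFunc.num_zero, RatFunc.denom_zero] at hdeg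
  have hnum : φ.num ≠ 0 := RatFunc.num_ne_zero hφ
  have hden : φ.denom ≠ 0 := RatFunc.denom_ne_zero φ
  have hpq : φ.num * φ.denom ≠ 0 := mul_ne_zero hnum hden
  have hnocommon : ∀ z : ℂ,
      rootMultiplicity z φ.num = 0 ∨ rootMultiplicity z φ.denom = 0 := by
    intro z
    by_contra hcon
    push_neg at hcon
    have h1 : φ.num.IsRoot z := by
      by_contra h; exact hcon.1 (rootMultiplicity_eq_zero h)
    have h2 : φ.denom.IsRoot z := by
      by_contra h; exact hcon.2 (rootMultiplicity_eq_zero h)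
    obtain ⟨u, v, huv⟩ := RatFunc.isCoprime_num_denom φ
    have := congrArg (eval z) huv
    simp only [eval_add, eval_mul, eval_one, IsRoot.def.mp h1, IsRoot.def.mp h2,
      mul_zero, add_zero] at this
    exact one_ne_zero this.symm
  constructor
  · intro H
    have hdp : ∀ z : ℂ, z ≠ 0 →
        m ∣ rootMultiplicity z φ.num ∧ m ∣ rootMultiplicity z φ.denom := by
      intro z hz
      have hH := H z hz
      rw [rootMultiplicity_mul hpq] at hH
      rcases hnocommon z with h | h
      · rw [h, zero_add] at hH
        exact ⟨h ▸ dvd_zero m, hH⟩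
      · rw [h, add_zero] at hH
        exact ⟨hH, h ▸ dvd_zero m⟩
    obtain ⟨e, T, hT, hpdec⟩ := poly_decomp hnum (fun z hz => (hdp z hz).1)
    obtain ⟨f, U, hU, hqdec⟩ := poly_decomp hden (fun z hz => (hdp z hz).2)
    have ha : φ.num.leadingCoeff ≠ 0 := leadingCoeff_ne_zero.mpr hnum
    have hb : φ.denom.leadingCoeff ≠ 0 := leadingCoeff_ne_zero.mpr hden
    set n : ℤ := (e : ℤ) - f with hn
    have hmod0 : 0 ≤ n % m := Int.emod_nonneg n (by omega)
    have hmod1 : n % m < m := Int.emod_lt_of_pos n hm0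
    refine ⟨φ.num.leadingCoeff / φ.denom.leadingCoeff, div_ne_zero ha hb,
      (n % m).toNat, by omega, RatFunc.X ^ (n / m) * (algebraMap ℂ[X] (RatFunc ℂ) T / algebraMap ℂ[X] (RatFunc ℂ) U), ?_⟩
    have hXne : (RatFunc.X : RatFunc ℂ) ≠ 0 := RatFunc.X_ne_zero
    have hjn : ((n % m).toNat : ℤ) = n % m := Int.toNat_of_nonneg hmod0
    have hXeq : (RatFunc.X : RatFunc ℂ) ^ e
        = RatFunc.X ^ (n % m).toNat * (RatFunc.X ^ (n / m)) ^ m * RatFunc.X ^ f := by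
      rw [← zpow_natCast (RatFunc.X : RatFunc ℂ) (n % m).toNat,
        ← zpow_natCast (RatFunc.X : RatFunc ℂ) e, ← zpow_natCast (RatFunc.X : RatFunc ℂ) f,
        ← zpow_natCast (RatFunc.X ^ (n / m) : RatFunc ℂ) m, ← zpow_mul,
        ← zpow_add₀ hXne, ← zpow_add₀ hXne]
      congr 1
      rw [hjn]
      have h1 := Int.emod_add_mul_ediv n m
      have h2 : n = (e : ℤ) - f := hn
      nlinarith [h1, h2]
    have hCb : RatFunc.C φ.denom.leadingCoeff ≠ 0 := by
      have := RatFunc.algebraMap_ne_zero (K := ℂ) (Polynomial.C_ne_zero.mpr hb)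
      rwa [RatFunc.algebraMap_C] at this
    have hAU : algebraMap ℂ[X] (RatFunc ℂ) U ≠ 0 := RatFunc.algebraMap_ne_zero hU
    conv_lhs => rw [← RatFunc.num_div_denom φ, hpdec, hqdec]
    simp only [map_mul, map_pow, RatFunc.algebraMap_C, RatFunc.algebraMap_X]
    rw [hXeq, map_div₀, mul_pow, div_pow]
    exact aux _ _ _ hCb (pow_ne_zero f hXne) (pow_ne_zero m hAU)
  · rintro ⟨c, hc, j, hj, ψ, hφeq⟩ z hz
    have hψ : ψ ≠ 0 := by
      rintro rfl
      rw [zero_pow (by omega), mul_zero] at hφeq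
      exact hφ hφeq
    have hCc : RatFunc.C c ≠ 0 := by
      have := RatFunc.algebraMap_ne_zero (K := ℂ) (Polynomial.C_ne_zero.mpr hc)
      rwa [RatFunc.algebraMap_C] at this
    have hXj : (RatFunc.X : RatFunc ℂ) ^ j ≠ 0 := pow_ne_zero _ RatFunc.X_ne_zero
    have hord : myOrd z φ = m * myOrd z ψ := by
      rw [hφeq, myOrd_mul z (mul_ne_zero hCc hXj) (pow_ne_zero m hψ),
        myOrd_mul z hCc hXj, myOrd_C z hc, myOrd_pow z RatFunc.X_ne_zero j,
        myOrd_X hz, myOrd_pow z hψ m]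
      ring
    have hdvd : (m : ℤ) ∣ (rootMultiplicity z φ.num : ℤ) - rootMultiplicity z φ.denom := by
      rw [show ((rootMultiplicity z φ.num : ℤ) - rootMultiplicity z φ.denom) = myOrd z φ from rfl,
        hord]
      exact Dvd.intro _ rfl
    rw [rootMultiplicity_mul hpq]
    rcases hnocommon z with h | h
    · rw [h, zero_add, ← Int.natCast_dvd_natCast]
      rw [h] at hdvd
      push_cast at hdvd
      simpa using (dvd_neg.mpr hdvd)
    · rw [h, add_zero, ← Int.natCast_dvd_natCast]
      rw [h] at hdvd
      push_cast at hdvd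
      simpa using hdvd
end

section
/- Let φ ∈ RatFunc ℂ with deg φ := max(φ.num.natDegree, φ.denom.natDegree) = d, where d ≥ 2 and d is even, and let Φ : ℕ → RatFunc ℂ be the iterate sequence of φ. Suppose there exists B : ℕ such that for every n ≥ 1, the number of z ∈ ℂ for which 4 does not divide Polynomial.rootMultiplicity z ((Φ n).num * (Φ n).denom) is at most B. Then the set {z : ℂ | z ≠ 0 ∧ ¬ (4 ∣ Polynomial.rootMultiplicity z (φ.num * φ.denom))} has at most one element. -/
/-!
Write `φ = u / v` and `Φ n = p / q` in lowest terms. If `U`, `V` are the degree-`d`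
homogenizations of `u`, `v`, then `Φ (n + 1) = U(p, q) / V(p, q)` in lowest terms, so
`max (deg p) (deg q) ≥ d ^ n`. A zero `w` of `p - a q` with `a ≠ 0` is a preimage of `0` or
`∞` under `Φ (n + 1)` of multiplicity `e_a(φ) · e_w(p - a q)`; hence if `4 ∤ e_a(φ)`, all but
`B` such points have `e_w(p - a q) ≥ 2`, while all but `B` preimages of `0, ∞` under `Φ n`
have multiplicity `≥ 4`. For two such values `a ≠ b`, the Riemann–Hurwitz bound for the four
fibres of `Φ n` over `0, ∞, a, b` (obtained from the Wronskian of `p` and `q`) then forces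
`deg p + deg q + 4 ≤ 12 B`, which fails for large `n`.
-/

open Polynomial UniqueFactorizationMonoid EuclideanDomain

namespace Polynomial

variable {K : Type*} [Field K] {u v p q : K[X]} {a b : K} {d : ℕ}

theorem _root_.IsCoprime.isCoprime_sub_C_mul (hpq : IsCoprime p q) (a : K) :
    IsCoprime q (p - C a * q) := by
  rw [show p - C a * q = p + q * -C a by ring]
  exact hpq.symm.add_mul_left_right _

theorem _root_.IsCoprime.isCoprime_sub_C_mul_sub_C_mul (hpq : IsCoprime p q) (hab : a ≠ b) :
    IsCoprime (p - C a * q) (p - C b * q) := by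
  have h : IsCoprime (p - C a * q) (C (a - b) * q) :=
    (isCoprime_mul_unit_left_right (isUnit_C.mpr (sub_ne_zero.mpr hab).isUnit) _ _).mpr
      (hpq.isCoprime_sub_C_mul a).symm
  rw [show p - C b * q = C (a - b) * q + (p - C a * q) * 1 by rw [C_sub]; ring]
  exact h.add_mul_left_right 1

theorem wronskian_sub_C_mul (p q : K[X]) (a b : K) :
    wronskian (p - C a * q) (p - C b * q) = C (a - b) * wronskian p q := by
  simp only [wronskian, derivative_sub, derivative_C_mul, C_sub]
  ring

theorem _root_.IsCoprime.sub_C_mul_ne_zero (hpq : IsCoprime p q)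
    (hM : 0 < max p.natDegree q.natDegree) (r : K) : p - C r * q ≠ 0 := by
  intro h
  obtain rfl : p = C r * q := sub_eq_zero.mp h
  have hq : q.natDegree = 0 :=
    natDegree_eq_zero_of_isUnit (hpq.isUnit_of_dvd' (dvd_mul_left q (C r)) dvd_rfl)
  have := natDegree_C_mul_le r q
  omega

theorem _root_.IsCoprime.wronskian_ne_zero [CharZero K] (hpq : IsCoprime p q)
    (hM : 0 < max p.natDegree q.natDegree) : wronskian p q ≠ 0 := by
  rw [Ne, hpq.wronskian_eq_zero_iff, derivative_eq_zero, derivative_eq_zero]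
  omega

theorem natDegree_pencil_add_two_le [DecidableEq K] [CharZero K] (hpq : IsCoprime p q)
    (hM : 0 < max p.natDegree q.natDegree) (ha : a ≠ 0) (hb : b ≠ 0) (hab : a ≠ b) :
    p.natDegree + q.natDegree + (p - C a * q).natDegree + (p - C b * q).natDegree + 2 ≤
      2 * (radical (p * q * (p - C a * q) * (p - C b * q))).natDegree := by
  set A := p - C a * q
  set B := p - C b * q
  set W := wronskian p q
  have hW : W ≠ 0 := hpq.wronskian_ne_zero hM
  have hp : p ≠ 0 := by rintro rfl; exact hW (wronskian_zero_left q)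
  have hq : q ≠ 0 := by rintro rfl; exact hW (wronskian_zero_right p)
  have hA : A ≠ 0 := hpq.sub_C_mul_ne_zero hM a
  have hB : B ≠ 0 := hpq.sub_C_mul_ne_zero hM b
  have hpencil (c : K) (hc : c ≠ 0) : IsCoprime p (p - C c * q) := by
    simpa using hpq.isCoprime_sub_C_mul_sub_C_mul hc.symm
  have hqA := hpq.isCoprime_sub_C_mul a
  have hqB := hpq.isCoprime_sub_C_mul b
  have hAB : IsCoprime A B := hpq.isCoprime_sub_C_mul_sub_C_mul hab
  have hunit : IsUnit (C (a - b)) := isUnit_C.mpr (sub_ne_zero.mpr hab).isUnit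
  have hWAB : wronskian A B = C (a - b) * W := wronskian_sub_C_mul p q a b
  -- As in the proof of `Polynomial.abc`, with four pairwise coprime factors instead of three.
  have hdvd : divRadical (p * q * A * B) ∣ W := by
    rw [divRadical_mul (((hpencil b hb).mul_left hqB).mul_left hAB),
      divRadical_mul ((hpencil a ha).mul_left hqA), divRadical_mul hpq]
    refine (((hpencil b hb).divRadical.mul_left hqB.divRadical).mul_left
      hAB.divRadical).mul_dvd ?_ ?_
    · refine (((hpencil a ha).divRadical.mul_left hqA.divRadical).mul_dvd
        (hpq.divRadical.mul_dvd ?_ ?_) ?_)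
      · exact divRadical_dvd_wronskian_left p q
      · exact divRadical_dvd_wronskian_right p q
      · rw [← hunit.dvd_mul_left, ← hWAB]
        exact divRadical_dvd_wronskian_left A B
    · rw [← hunit.dvd_mul_left, ← hWAB]
      exact divRadical_dvd_wronskian_right A B
  have hF : p * q * A * B ≠ 0 := mul_ne_zero (mul_ne_zero (mul_ne_zero hp hq) hA) hB
  have hdeg : (p * q * A * B).natDegree ≤ W.natDegree + (radical (p * q * A * B)).natDegree := by
    conv_lhs => rw [← divRadical_mul_radical (a := p * q * A * B)]
    rw [natDegree_mul (divRadical_ne_zero hF) radical_ne_zero]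
    have := natDegree_le_of_dvd hdvd hW
    omega
  have hWpq : W.natDegree < p.natDegree + q.natDegree := natDegree_wronskian_lt_add hW
  have hWAB' : W.natDegree < A.natDegree + B.natDegree := by
    rw [← natDegree_C_mul (sub_ne_zero.mpr hab), ← hWAB]
    exact natDegree_wronskian_lt_add (hWAB ▸ mul_ne_zero hunit.ne_zero hW)
  rw [natDegree_mul (mul_ne_zero (mul_ne_zero hp hq) hA) hB,
    natDegree_mul (mul_ne_zero hp hq) hA, natDegree_mul hp hq] at hdeg
  omega

theorem natDegree_radical_le_card_roots_toFinset [DecidableEq K] [IsAlgClosed K] (f : K[X]) :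
    (radical f).natDegree ≤ f.roots.toFinset.card := by
  rcases eq_or_ne f 0 with rfl | hf
  · simp
  set P := ∏ w ∈ f.roots.toFinset, (X - C w)
  have hdvd : f ∣ P ^ f.natDegree := calc
    f = C f.leadingCoeff * (f.roots.map (X - C ·)).prod :=
      (C_leadingCoeff_mul_prod_multiset_X_sub_C
        (IsAlgClosed.splits f).natDegree_eq_card_roots.symm).symm
    _ ∣ ∏ w ∈ f.roots.toFinset, (X - C w) ^ f.roots.count w := by
      rw [C_mul_dvd (leadingCoeff_ne_zero.mpr hf), Finset.prod_multiset_map_count]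
    _ ∣ P ^ f.natDegree := by
      rw [← Finset.prod_pow]
      refine Finset.prod_dvd_prod_of_dvd _ _ fun w _ => pow_dvd_pow _ ?_
      rw [(IsAlgClosed.splits f).natDegree_eq_card_roots]
      exact Multiset.count_le_card w f.roots
  have hP : P ≠ 0 := Finset.prod_ne_zero_iff.mpr fun w _ => X_sub_C_ne_zero w
  calc (radical f).natDegree ≤ P.natDegree :=
        natDegree_le_of_dvd ((exists_dvd_pow_iff_radical_dvd hf).mp ⟨_, hdvd⟩) hP
    _ = f.roots.toFinset.card := by
      simp [P, natDegree_prod _ _ fun w (_ : w ∈ f.roots.toFinset) => X_sub_C_ne_zero w]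

theorem mul_card_roots_toFinset_le [DecidableEq K] [IsAlgClosed K] {f : K[X]} (hf : f ≠ 0)
    {bad : Set K} (hbad : bad.Finite) {l : ℕ}
    (h : ∀ w, f.IsRoot w → w ∉ bad → l ≤ rootMultiplicity w f) :
    l * f.roots.toFinset.card ≤ l * bad.ncard + f.natDegree := by
  set good := f.roots.toFinset \ hbad.toFinset
  have hcard : f.roots.toFinset.card ≤ good.card + bad.ncard := by
    rw [Set.ncard_eq_toFinset_card bad hbad]
    exact Finset.card_le_card_sdiff_add_card
  have hgood : l * good.card ≤ f.natDegree := calc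
    l * good.card = ∑ _w ∈ good, l := by rw [Finset.sum_const, smul_eq_mul, mul_comm]
    _ ≤ ∑ w ∈ good, rootMultiplicity w f := Finset.sum_le_sum fun w hw => by
      rw [Finset.mem_sdiff, Multiset.mem_toFinset, mem_roots hf, Set.Finite.mem_toFinset] at hw
      exact h w hw.1 hw.2
    _ ≤ ∑ w ∈ f.roots.toFinset, rootMultiplicity w f :=
      Finset.sum_le_sum_of_subset Finset.sdiff_subset
    _ = f.natDegree := by
      simp_rw [← count_roots, Multiset.toFinset_sum_count_eq]
      exact (IsAlgClosed.splits f).natDegree_eq_card_roots.symm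
  have := Nat.mul_le_mul_left l hcard
  rw [mul_add] at this
  omega

/-- The value `y ^ d * u (x / y)` of the degree-`d` homogenization of `u` at `(x, y)` when `u`
splits, written through the roots of `u` so that it makes sense in any `K`-algebra. -/
noncomputable def homogenizedEval {A : Type*} [CommRing A] [Algebra K A]
    (u : K[X]) (d : ℕ) (x y : A) : A :=
  algebraMap K A u.leadingCoeff * y ^ (d - u.natDegree) *
    (u.roots.map fun r => x - algebraMap K A r * y).prod

theorem map_homogenizedEval {A B : Type*} [CommRing A] [Algebra K A] [CommRing B] [Algebra K B]
    (f : A →ₐ[K] B) (u : K[X]) (d : ℕ) (x y : A) :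
    f (homogenizedEval u d x y) = homogenizedEval u d (f x) (f y) := by
  simp [homogenizedEval, map_multiset_prod, Multiset.map_map]

theorem homogenizedEval_polynomial_eq (u : K[X]) (d : ℕ) (p q : K[X]) :
    homogenizedEval u d p q =
      C u.leadingCoeff * q ^ (d - u.natDegree) * (u.roots.map fun r => p - C r * q).prod :=
  rfl

theorem homogenizedEval_eq_aeval_div_mul_pow [IsAlgClosed K] {L : Type*} [Field L]
    [Algebra K L] (hd : u.natDegree ≤ d) (x : L) {y : L} (hy : y ≠ 0) :
    homogenizedEval u d x y = aeval (x / y) u * y ^ d := by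
  have hcard : Multiset.card u.roots = u.natDegree :=
    (IsAlgClosed.splits u).natDegree_eq_card_roots.symm
  have hfac : aeval (x / y) u =
      algebraMap K L u.leadingCoeff * (u.roots.map fun r => x / y - algebraMap K L r).prod := by
    conv_lhs => rw [← C_leadingCoeff_mul_prod_multiset_X_sub_C hcard]
    simp [map_multiset_prod, Multiset.map_map]
  have hprod : (u.roots.map fun r => x - algebraMap K L r * y).prod =
      (u.roots.map fun r => x / y - algebraMap K L r).prod * y ^ u.natDegree := by
    rw [← hcard, ← Multiset.prod_replicate, ← Multiset.map_const', ← Multiset.prod_map_mul]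
    congr 1
    refine Multiset.map_congr rfl fun r _ => ?_
    field_simp
  rw [homogenizedEval, hprod, hfac, ← pow_sub_mul_pow y hd]
  ring

theorem eq_zero_of_homogenizedEval_eq_zero [IsAlgClosed K] (hu : u ≠ 0) (hv : v ≠ 0)
    (huv : IsCoprime u v) (hd : max u.natDegree v.natDegree = d) {x y : K}
    (hxu : homogenizedEval u d x y = 0) (hxv : homogenizedEval v d x y = 0) : x = 0 ∧ y = 0 := by
  by_cases hy : y = 0
  · refine ⟨?_, hy⟩
    by_contra hx
    subst hy
    have hlt {w : K[X]} (hw : w ≠ 0) (h : homogenizedEval w d x 0 = 0) : w.natDegree < d := by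
      simp [homogenizedEval, hw, hx] at h
      omega
    have := hlt hu hxu
    have := hlt hv hxv
    omega
  · rw [homogenizedEval_eq_aeval_div_mul_pow (hd ▸ le_max_left _ _) x hy] at hxu
    rw [homogenizedEval_eq_aeval_div_mul_pow (hd ▸ le_max_right _ _) x hy] at hxv
    have := (isCoprime_iff_aeval_ne_zero_of_isAlgClosed K K u v).mp huv (x / y)
    simp_all

theorem homogenizedEval_ne_zero (hu : u ≠ 0) (hpq : IsCoprime p q)
    (hM : 0 < max p.natDegree q.natDegree) : homogenizedEval u d p q ≠ 0 := by
  have hq : q ≠ 0 := by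
    rintro rfl
    have := natDegree_eq_zero_of_isUnit (isCoprime_zero_right.mp hpq)
    simp_all
  rw [homogenizedEval_polynomial_eq]
  refine mul_ne_zero (mul_ne_zero (by simpa using hu) (pow_ne_zero _ hq)) ?_
  exact Multiset.prod_ne_zero fun h => by
    obtain ⟨r, -, hr⟩ := Multiset.mem_map.mp h
    exact hpq.sub_C_mul_ne_zero hM r hr

theorem coeff_homogenizedEval [IsAlgClosed K] (hd : u.natDegree ≤ d) {M : ℕ}
    (hp : p.natDegree ≤ M) (hq : q.natDegree ≤ M) :
    (homogenizedEval u d p q).coeff (d * M) =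
      homogenizedEval u d (p.coeff M) (q.coeff M) := by
  have hcard : Multiset.card u.roots = u.natDegree :=
    (IsAlgClosed.splits u).natDegree_eq_card_roots.symm
  have hfac : ∀ g ∈ u.roots.map (fun r => p - C r * q), g.natDegree ≤ M := by
    simp only [Multiset.mem_map]
    rintro g ⟨r, -, rfl⟩
    exact (natDegree_sub_le _ _).trans (max_le hp ((natDegree_C_mul_le r q).trans hq))
  have hprod : (u.roots.map fun r => p - C r * q).prod.natDegree ≤ u.natDegree * M := by
    refine (natDegree_multiset_prod_le _).trans ?_
    have := Multiset.sum_le_card_nsmul ((u.roots.map fun r => p - C r * q).map natDegree) M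
      fun n hn => by
        obtain ⟨g, hg, rfl⟩ := Multiset.mem_map.mp hn
        exact hfac g hg
    simpa [hcard, mul_comm] using this
  rw [homogenizedEval_polynomial_eq, homogenizedEval, mul_assoc, coeff_C_mul,
    show d * M = (d - u.natDegree) * M + u.natDegree * M by rw [← add_mul, Nat.sub_add_cancel hd],
    coeff_mul_add_eq_of_natDegree_le (natDegree_pow_le_of_le _ hq) hprod,
    coeff_pow_of_natDegree_le hq, ← hcard, ← Multiset.card_map (fun r => p - C r * q),
    coeff_multiset_prod_of_natDegree_le _ _ hfac]
  simp [Multiset.map_map, mul_assoc]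

theorem rootMultiplicity_homogenizedEval (hH : homogenizedEval u d p q ≠ 0) {w a : K}
    (hqw : q.eval w ≠ 0) (hpw : p.eval w = a * q.eval w) :
    rootMultiplicity w (homogenizedEval u d p q) =
      rootMultiplicity a u * rootMultiplicity w (p - C a * q) := by
  classical
  rw [homogenizedEval_polynomial_eq] at hH ⊢
  have h0 : (0 : K[X]) ∉ u.roots.map fun r => p - C r * q :=
    fun h => right_ne_zero_of_mul hH (Multiset.prod_eq_zero h)
  have hoff (r : K) (hr : r ≠ a) : (p - C r * q).roots.count w = 0 := by
    rw [count_roots, rootMultiplicity_eq_zero_iff]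
    intro h
    simp only [IsRoot, eval_sub, eval_mul, eval_C, hpw, ← sub_mul, mul_eq_zero, sub_eq_zero] at h
    exact absurd (h.resolve_right hqw).symm hr
  rw [rootMultiplicity_mul hH, rootMultiplicity_mul (left_ne_zero_of_mul hH), rootMultiplicity_C,
    rootMultiplicity_eq_zero (by simp [IsRoot, hqw]), ← count_roots,
    roots_multiset_prod _ h0, Multiset.count_bind, Multiset.map_map, Function.comp_def,
    Multiset.sum_map_eq_nsmul_single a fun r hr _ => hoff r hr]
  simp [count_roots]

theorem isCoprime_homogenizedEval [IsAlgClosed K] (hu : u ≠ 0) (hv : v ≠ 0)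
    (huv : IsCoprime u v) (hd : max u.natDegree v.natDegree = d) (hpq : IsCoprime p q) :
    IsCoprime (homogenizedEval u d p q) (homogenizedEval v d p q) := by
  rw [isCoprime_iff_aeval_ne_zero_of_isAlgClosed K K] at hpq ⊢
  intro w
  by_contra! h
  rw [map_homogenizedEval, map_homogenizedEval] at h
  obtain ⟨hp, hq⟩ := eq_zero_of_homogenizedEval_eq_zero hu hv huv hd h.1 h.2
  exact (hpq w).elim (· hp) (· hq)

theorem mul_max_natDegree_le_max_natDegree_homogenizedEval [IsAlgClosed K] (hu : u ≠ 0)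
    (hv : v ≠ 0) (huv : IsCoprime u v) (hd : max u.natDegree v.natDegree = d) (p q : K[X]) :
    d * max p.natDegree q.natDegree ≤
      max (homogenizedEval u d p q).natDegree (homogenizedEval v d p q).natDegree := by
  set M := max p.natDegree q.natDegree
  rcases Nat.eq_zero_or_pos M with hM | hM
  · simp [hM]
  have hlead : p.coeff M ≠ 0 ∨ q.coeff M ≠ 0 := by
    rcases max_choice p.natDegree q.natDegree with h | h
    · left
      have hp : p ≠ 0 := by rintro rfl; simp_all [M]
      rw [show M = p.natDegree from h, coeff_natDegree]
      exact leadingCoeff_ne_zero.mpr hp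
    · right
      have hq : q ≠ 0 := by rintro rfl; simp_all [M]
      rw [show M = q.natDegree from h, coeff_natDegree]
      exact leadingCoeff_ne_zero.mpr hq
  -- The coefficients of degree `d * M` are the values of the homogenizations at the top
  -- coefficients of `p` and `q`, which cannot both vanish.
  have hcoeff {w : K[X]} (hw : w.natDegree ≤ d)
      (hne : homogenizedEval w d (p.coeff M) (q.coeff M) ≠ 0) :
      d * M ≤ (homogenizedEval w d p q).natDegree := by
    refine le_natDegree_of_ne_zero ?_
    rwa [coeff_homogenizedEval hw (le_max_left _ _) (le_max_right _ _)]
  by_cases hU : homogenizedEval u d (p.coeff M) (q.coeff M) = 0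
  · have hV : homogenizedEval v d (p.coeff M) (q.coeff M) ≠ 0 := fun hV =>
      hlead.elim (· (eq_zero_of_homogenizedEval_eq_zero hu hv huv hd hU hV).1)
        (· (eq_zero_of_homogenizedEval_eq_zero hu hv huv hd hU hV).2)
    exact (hcoeff (hd ▸ le_max_right _ _) hV).trans (le_max_right _ _)
  · exact (hcoeff (hd ▸ le_max_left _ _) hU).trans (le_max_left _ _)

theorem finite_setOf_not_dvd_rootMultiplicity (f : K[X]) (k : ℕ) :
    {z | ¬k ∣ rootMultiplicity z f}.Finite := by
  classical
  refine f.roots.toFinset.finite_toSet.subset fun z hz => ?_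
  rcases eq_or_ne f 0 with rfl | hf
  · simp at hz
  · rw [Finset.mem_coe, Multiset.mem_toFinset, mem_roots hf]
    by_contra h
    exact hz (by simp [rootMultiplicity_eq_zero h])

theorem two_mul_card_roots_sub_C_mul_le [DecidableEq K] [IsAlgClosed K] (hu : u ≠ 0)
    (hv : v ≠ 0) (hpq : IsCoprime p q) (hM : 0 < max p.natDegree q.natDegree) {c : K}
    (hc : ¬4 ∣ rootMultiplicity c (u * v)) :
    2 * (p - C c * q).roots.toFinset.card ≤
      2 * {z | ¬4 ∣ rootMultiplicity z
        (homogenizedEval u d p q * homogenizedEval v d p q)}.ncard + (p - C c * q).natDegree := by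
  set U := homogenizedEval u d p q
  set V := homogenizedEval v d p q
  have hUV : U * V ≠ 0 :=
    mul_ne_zero (homogenizedEval_ne_zero hu hpq hM) (homogenizedEval_ne_zero hv hpq hM)
  refine mul_card_roots_toFinset_le (hpq.sub_C_mul_ne_zero hM c)
    (finite_setOf_not_dvd_rootMultiplicity (U * V) 4) fun w hw hT => ?_
  have hpw : p.eval w = c * q.eval w := by simpa [sub_eq_zero] using hw
  have hqw : q.eval w ≠ 0 := fun hqw => by
    simpa [hqw, hpw] using aeval_ne_zero_of_isCoprime hpq w
  have hmult : rootMultiplicity w (U * V) =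
      rootMultiplicity c (u * v) * rootMultiplicity w (p - C c * q) := by
    rw [rootMultiplicity_mul hUV, rootMultiplicity_mul (mul_ne_zero hu hv),
      rootMultiplicity_homogenizedEval (left_ne_zero_of_mul hUV) hqw hpw,
      rootMultiplicity_homogenizedEval (right_ne_zero_of_mul hUV) hqw hpw, add_mul]
  have h4 : 4 ∣ rootMultiplicity c (u * v) * rootMultiplicity w (p - C c * q) :=
    hmult ▸ not_not.mp hT
  have hpos := (rootMultiplicity_pos (hpq.sub_C_mul_ne_zero hM c)).mpr hw
  by_contra hlt
  obtain h : rootMultiplicity w (p - C c * q) = 1 := by omega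
  exact hc (by simpa [h] using h4)

theorem natDegree_add_natDegree_add_four_le [IsAlgClosed K] [CharZero K] (hu : u ≠ 0)
    (hv : v ≠ 0) (hpq : IsCoprime p q) (hM : 0 < max p.natDegree q.natDegree)
    (ha0 : a ≠ 0) (hb0 : b ≠ 0) (hab : a ≠ b)
    (ha : ¬4 ∣ rootMultiplicity a (u * v)) (hb : ¬4 ∣ rootMultiplicity b (u * v)) :
    p.natDegree + q.natDegree + 4 ≤
      4 * {z | ¬4 ∣ rootMultiplicity z (p * q)}.ncard +
        8 * {z | ¬4 ∣ rootMultiplicity z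
          (homogenizedEval u d p q * homogenizedEval v d p q)}.ncard := by
  classical
  have hp : p ≠ 0 := by simpa using hpq.sub_C_mul_ne_zero hM 0
  have hq : q ≠ 0 := by simpa using hpq.symm.sub_C_mul_ne_zero (max_comm p.natDegree _ ▸ hM) 0
  have hfiber₀ := mul_card_roots_toFinset_le (mul_ne_zero hp hq)
    (finite_setOf_not_dvd_rootMultiplicity (p * q) 4) (l := 4) fun w hw hS =>
      Nat.le_of_dvd ((rootMultiplicity_pos (mul_ne_zero hp hq)).mpr hw) (not_not.mp hS)
  have hfiber_a := two_mul_card_roots_sub_C_mul_le (d := d) hu hv hpq hM ha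
  have hfiber_b := two_mul_card_roots_sub_C_mul_le (d := d) hu hv hpq hM hb
  have hRH := natDegree_pencil_add_two_le hpq hM ha0 hb0 hab
  have hrad : (radical (p * q * (p - C a * q) * (p - C b * q))).natDegree ≤
      (radical (p * q)).natDegree + (radical (p - C a * q)).natDegree +
        (radical (p - C b * q)).natDegree := by
    have hdvd : radical (p * q * (p - C a * q) * (p - C b * q)) ∣
        radical (p * q) * radical (p - C a * q) * radical (p - C b * q) :=
      radical_mul_dvd.trans (mul_dvd_mul_right radical_mul_dvd _)
    have := natDegree_le_of_dvd hdvd (by simp)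
    rwa [natDegree_mul (by simp) radical_ne_zero, natDegree_mul radical_ne_zero radical_ne_zero]
      at this
  have := natDegree_radical_le_card_roots_toFinset (p * q)
  have := natDegree_radical_le_card_roots_toFinset (p - C a * q)
  have := natDegree_radical_le_card_roots_toFinset (p - C b * q)
  rw [natDegree_mul hp hq] at hfiber₀
  omega

end Polynomial

namespace RatFunc

variable {K : Type*} [Field K] {p q u v : K[X]} {d : ℕ}

theorem associated_num_denom_div (hpq : IsCoprime p q) (hq : q ≠ 0) :
    Associated (algebraMap K[X] (RatFunc K) p / algebraMap K[X] (RatFunc K) q).num p ∧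
      Associated (algebraMap K[X] (RatFunc K) p / algebraMap K[X] (RatFunc K) q).denom q := by
  set x := algebraMap K[X] (RatFunc K) p / algebraMap K[X] (RatFunc K) q
  have hx := isCoprime_num_denom x
  have hcross : x.num * q = p * x.denom := by
    have h := num_div_denom x
    rw [div_eq_div_iff (algebraMap_ne_zero x.denom_ne_zero) (algebraMap_ne_zero hq)] at h
    exact algebraMap_injective K (by simpa only [map_mul] using h)
  refine ⟨associated_of_dvd_dvd (hx.dvd_of_dvd_mul_right ⟨q, hcross.symm⟩)
      (hpq.dvd_of_dvd_mul_right ⟨x.denom, hcross⟩),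
    associated_of_dvd_dvd (hx.symm.dvd_of_dvd_mul_right ⟨p, ?_⟩)
      (hpq.symm.dvd_of_dvd_mul_right ⟨x.num, ?_⟩)⟩
  · rw [mul_comm, hcross, mul_comm]
  · rw [mul_comm, ← hcross, mul_comm]

theorem aeval_div_aeval_eq [IsAlgClosed K] (hud : u.natDegree ≤ d) (hvd : v.natDegree ≤ d)
    (x : RatFunc K) :
    aeval x u / aeval x v =
      algebraMap K[X] (RatFunc K) (homogenizedEval u d x.num x.denom) /
        algebraMap K[X] (RatFunc K) (homogenizedEval v d x.num x.denom) := by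
  have hq : algebraMap K[X] (RatFunc K) x.denom ≠ 0 := algebraMap_ne_zero x.denom_ne_zero
  have key {w : K[X]} (hw : w.natDegree ≤ d) :
      algebraMap K[X] (RatFunc K) (homogenizedEval w d x.num x.denom) =
        aeval x w * algebraMap K[X] (RatFunc K) x.denom ^ d := by
    have := map_homogenizedEval (IsScalarTower.toAlgHom K K[X] (RatFunc K)) w d x.num x.denom
    simp only [IsScalarTower.coe_toAlgHom'] at this
    rw [this, homogenizedEval_eq_aeval_div_mul_pow hw _ hq, num_div_denom]
  rw [key hud, key hvd, mul_div_mul_right _ _ (pow_ne_zero _ hq)]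

theorem associated_num_denom_aeval_div_aeval [IsAlgClosed K] (hu : u ≠ 0) (hv : v ≠ 0)
    (huv : IsCoprime u v) (hd : max u.natDegree v.natDegree = d) {x : RatFunc K}
    (hx : 0 < max x.num.natDegree x.denom.natDegree) :
    Associated (aeval x u / aeval x v).num (homogenizedEval u d x.num x.denom) ∧
      Associated (aeval x u / aeval x v).denom (homogenizedEval v d x.num x.denom) := by
  rw [aeval_div_aeval_eq (hd ▸ le_max_left _ _) (hd ▸ le_max_right _ _)]
  exact associated_num_denom_div
    (isCoprime_homogenizedEval hu hv huv hd (isCoprime_num_denom x))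
    (homogenizedEval_ne_zero hv (isCoprime_num_denom x) hx)

theorem mul_max_natDegree_le_aeval_div_aeval [IsAlgClosed K] (hu : u ≠ 0) (hv : v ≠ 0)
    (huv : IsCoprime u v) (hd : max u.natDegree v.natDegree = d) {x : RatFunc K}
    (hx : 0 < max x.num.natDegree x.denom.natDegree) :
    d * max x.num.natDegree x.denom.natDegree ≤
      max (aeval x u / aeval x v).num.natDegree (aeval x u / aeval x v).denom.natDegree := by
  obtain ⟨hnum, hdenom⟩ := associated_num_denom_aeval_div_aeval hu hv huv hd hx
  rw [natDegree_eq_of_degree_eq (degree_eq_degree_of_associated hnum),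
    natDegree_eq_of_degree_eq (degree_eq_degree_of_associated hdenom)]
  exact mul_max_natDegree_le_max_natDegree_homogenizedEval hu hv huv hd _ _

theorem pow_le_max_natDegree_iterate [IsAlgClosed K] (hu : u ≠ 0) (hv : v ≠ 0)
    (huv : IsCoprime u v) (hd : max u.natDegree v.natDegree = d) (hd1 : 1 ≤ d)
    {Φ : ℕ → RatFunc K} (hΦ0 : Φ 0 = X)
    (hΦ : ∀ n, Φ (n + 1) = aeval (Φ n) u / aeval (Φ n) v) (n : ℕ) :
    d ^ n ≤ max (Φ n).num.natDegree (Φ n).denom.natDegree := by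
  induction n with
  | zero => simp [hΦ0]
  | succ n ih =>
    rw [hΦ, pow_succ, mul_comm]
    exact (Nat.mul_le_mul_left d ih).trans (mul_max_natDegree_le_aeval_div_aeval hu hv huv hd
      ((Nat.pow_pos hd1).trans_le ih))

theorem natDegree_num_add_natDegree_denom_add_four_le [IsAlgClosed K] [CharZero K]
    (hu : u ≠ 0) (hv : v ≠ 0) (huv : IsCoprime u v) (hd : max u.natDegree v.natDegree = d)
    {x : RatFunc K} (hx : 0 < max x.num.natDegree x.denom.natDegree) {a b : K} (ha0 : a ≠ 0)
    (hb0 : b ≠ 0) (hab : a ≠ b) (ha : ¬4 ∣ rootMultiplicity a (u * v))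
    (hb : ¬4 ∣ rootMultiplicity b (u * v)) :
    x.num.natDegree + x.denom.natDegree + 4 ≤
      4 * {z | ¬4 ∣ rootMultiplicity z (x.num * x.denom)}.ncard +
        8 * {z | ¬4 ∣ rootMultiplicity z
          ((aeval x u / aeval x v).num * (aeval x u / aeval x v).denom)}.ncard := by
  classical
  obtain ⟨hnum, hdenom⟩ := associated_num_denom_aeval_div_aeval hu hv huv hd hx
  have hroots := (hnum.mul_mul hdenom).roots_eq
  simp_rw [← count_roots, hroots, count_roots]
  exact natDegree_add_natDegree_add_four_le hu hv (isCoprime_num_denom x) hx ha0 hb0 hab ha hb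

end RatFunc

theorem stmt_10_general (φ : RatFunc ℂ) (d : ℕ)
    (hd : d = max φ.num.natDegree φ.denom.natDegree)
    (hd2 : 2 ≤ d)
    (Φ : ℕ → RatFunc ℂ)
    (hΦ0 : Φ 0 = RatFunc.X)
    (hΦ : ∀ n, Φ (n + 1) =
      Polynomial.aeval (Φ n) φ.num / Polynomial.aeval (Φ n) φ.denom)
    (hbd : ∃ B : ℕ, ∀ n : ℕ, 1 ≤ n →
      {z : ℂ | ¬ (4 ∣ Polynomial.rootMultiplicity z
        ((Φ n).num * (Φ n).denom))}.ncard ≤ B) :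
    {z : ℂ | z ≠ 0 ∧
      ¬ (4 ∣ Polynomial.rootMultiplicity z (φ.num * φ.denom))}.Subsingleton := by
  obtain ⟨B, hB⟩ := hbd
  rintro a ⟨ha0, ha⟩ b ⟨hb0, hb⟩
  by_contra hab
  have hu : φ.num ≠ 0 := by rintro h; simp [h] at ha
  have hgrowth := RatFunc.pow_le_max_natDegree_iterate hu φ.denom_ne_zero φ.isCoprime_num_denom
    hd.symm (by omega) hΦ0 hΦ
  set n := 12 * B + 1
  have hlt : n < d ^ n := Nat.lt_two_pow_self.trans_le (Nat.pow_le_pow_left hd2 n)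
  have hcount := RatFunc.natDegree_num_add_natDegree_denom_add_four_le hu φ.denom_ne_zero
    φ.isCoprime_num_denom hd.symm ((Nat.zero_lt_of_lt hlt).trans_le (hgrowth n)) ha0 hb0 hab ha hb
  rw [← hΦ n] at hcount
  have := hB n (by omega)
  have := hB (n + 1) (by omega)
  have := hgrowth n
  omega

/-- Lemma 5.2 ('blemma') of the paper: for an even-degree rational map with 0 and ∞
4-branch abundant, at most one preimage of {0, ∞} other than 0, ∞ has ramification
index not divisible by 4. -/
theorem stmt_10 (φ : RatFunc ℂ) (d : ℕ)
    (hd : d = max φ.num.natDegree φ.denom.natDegree)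
    (hd2 : 2 ≤ d) (heven : Even d)
    (Φ : ℕ → RatFunc ℂ)
    (hΦ0 : Φ 0 = RatFunc.X)
    (hΦ : ∀ n, Φ (n + 1) =
      Polynomial.aeval (Φ n) φ.num / Polynomial.aeval (Φ n) φ.denom)
    (hbd : ∃ B : ℕ, ∀ n : ℕ, 1 ≤ n →
      {z : ℂ | ¬ (4 ∣ Polynomial.rootMultiplicity z
        ((Φ n).num * (Φ n).denom))}.ncard ≤ B) :
    {z : ℂ | z ≠ 0 ∧
      ¬ (4 ∣ Polynomial.rootMultiplicity z (φ.num * φ.denom))}.Subsingleton :=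
  stmt_10_general φ d hd hd2 Φ hΦ0 hΦ hbd
end

section
/- Let F be a field of characteristic zero, let F̄ := AlgebraicClosure F, let m ≥ 2, and let h ∈ F[X] with h ≠ 0; write h̄ := Polynomial.map (algebraMap F F̄) h. Suppose f, g ∈ F̄[X] with g monic and h̄ = f * g^m, and suppose g has maximal degree among such factorizations: for all f', g' ∈ F̄[X] with g' monic and h̄ = f' * g'^m, one has g'.natDegree ≤ g.natDegree. Then there exist f₀, g₀ ∈ F[X] with f = Polynomial.map (algebraMap F F̄) f₀ and g = Polynomial.map (algebraMap F F̄) g₀. -/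
/-!
Since `a ^ m ∣ c` and `b ^ m ∣ c` imply `lcm a b ^ m ∣ c`, a monic `g` of maximal degree with
`g ^ m ∣ h̄` is divisible by every monic `q` with `q ^ m ∣ h̄`, so it is the unique such
polynomial of its degree. Every `σ ∈ Gal(F̄/F)` fixes `h̄`, hence maps `g` to another such
polynomial, so `σ` fixes `g`, and then also `f = h̄ / g ^ m`. In characteristic zero `F̄/F` is
Galois, so polynomials fixed by the Galois group have coefficients in `F`.
-/

open Polynomial

theorem lcm_pow_dvd_of_pow_dvd {α : Type*} [CommMonoidWithZero α] [GCDMonoid α]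
    {a b c : α} {m : ℕ} (ha : a ^ m ∣ c) (hb : b ^ m ∣ c) : lcm a b ^ m ∣ c := by
  obtain ⟨a', b', ea, eb, hunit⟩ := extract_gcd a b
  generalize gcd a b = d at ea eb
  by_cases hd : d = 0
  · obtain rfl : a = 0 := by rw [ea, hd, zero_mul]
    rwa [lcm_zero_left]
  obtain ⟨k, rfl⟩ := (pow_dvd_pow_of_dvd ⟨a', ea⟩ m).trans ha
  have hdm : d ^ m ≠ 0 := pow_ne_zero m hd
  rw [ea, mul_pow, mul_dvd_mul_iff_left hdm] at ha
  rw [eb, mul_pow, mul_dvd_mul_iff_left hdm] at hb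
  have hk : a' ^ m * b' ^ m ∣ k := (gcd_isUnit_iff_isRelPrime.mp hunit).pow.mul_dvd ha hb
  have hlcm : lcm a b ∣ d * a' * b' :=
    lcm_dvd ⟨b', by rw [ea]⟩ ⟨a', by rw [eb, mul_right_comm]⟩
  calc lcm a b ^ m ∣ (d * a' * b') ^ m := pow_dvd_pow_of_dvd hlcm m
    _ = d ^ m * (a' ^ m * b' ^ m) := by rw [mul_pow, mul_pow, mul_assoc]
    _ ∣ d ^ m * k := mul_dvd_mul_left _ hk

namespace Polynomial

section MaximalPowDivisor

variable {K : Type*} [Field K] {H g : K[X]} {m : ℕ} (hg : g.Monic) (hgH : g ^ m ∣ H)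
  (hmax : ∀ p : K[X], p.Monic → p ^ m ∣ H → p.natDegree ≤ g.natDegree)
include hg hgH hmax

theorem dvd_of_pow_dvd_of_natDegree_maximal {q : K[X]} (hq : q.Monic) (hqH : q ^ m ∣ H) :
    q ∣ g := by
  classical
  have hL : (lcm g q).Monic := by
    simpa using monic_normalize (lcm_ne_zero_iff.mpr ⟨hg.ne_zero, hq.ne_zero⟩)
  have hLg : lcm g q = g := eq_of_monic_of_dvd_of_natDegree_le hg hL (dvd_lcm_left g q)
    (hmax _ hL (lcm_pow_dvd_of_pow_dvd hgH hqH))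
  exact hLg ▸ dvd_lcm_right g q

theorem map_eq_self_of_natDegree_maximal (σ : K →+* K) (hH : H.map σ = H) : g.map σ = g := by
  have hσg : g.map σ ∣ g := dvd_of_pow_dvd_of_natDegree_maximal hg hgH hmax (hg.map σ)
    (by simpa only [Polynomial.map_pow, hH] using Polynomial.map_dvd σ hgH)
  exact (eq_of_monic_of_dvd_of_natDegree_le (hg.map σ) hg hσg (natDegree_map σ).ge).symm

end MaximalPowDivisor

theorem exists_eq_map_of_forall_map_eq {k K : Type*} [Field k] [Field K]
    [Algebra k K] [IsGalois k K] {p : K[X]} (hp : ∀ σ : Gal(K/k), p.map (σ : K →+* K) = p) :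
    ∃ p₀ : k[X], p = p₀.map (algebraMap k K) := by
  have hcoeff (n : ℕ) : p.coeff n ∈ Set.range (algebraMap k K) :=
    (InfiniteGalois.mem_range_algebraMap_iff_fixed _).mpr fun σ ↦ by
      simpa [coeff_map] using congrArg (coeff · n) (hp σ)
  obtain ⟨p₀, hp₀⟩ := (lifts_iff_coeff_lifts p).mpr hcoeff
  exact ⟨p₀, hp₀.symm⟩

end Polynomial

theorem stmt_11_general
    (F : Type*) [Field F] [CharZero F]
    (m : ℕ)
    (h : Polynomial F)
    (f g : Polynomial (AlgebraicClosure F)) (hg : g.Monic)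
    (hfg : Polynomial.map (algebraMap F (AlgebraicClosure F)) h = f * g ^ m)
    (hmax : ∀ f' g' : Polynomial (AlgebraicClosure F), g'.Monic →
      Polynomial.map (algebraMap F (AlgebraicClosure F)) h = f' * g' ^ m →
      g'.natDegree ≤ g.natDegree) :
    (∃ f₀ : Polynomial F, f = Polynomial.map (algebraMap F (AlgebraicClosure F)) f₀) ∧
    (∃ g₀ : Polynomial F, g = Polynomial.map (algebraMap F (AlgebraicClosure F)) g₀) := by
  set K := AlgebraicClosure F
  set H := h.map (algebraMap F K)
  have hgH : g ^ m ∣ H := ⟨f, hfg.trans (mul_comm _ _)⟩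
  have hmax' (p : K[X]) (hp : p.Monic) : p ^ m ∣ H → p.natDegree ≤ g.natDegree :=
    fun ⟨c, hc⟩ ↦ hmax c p hp (hc.trans (mul_comm _ _))
  have hH_fixed (σ : Gal(K/F)) : H.map (σ : K →+* K) = H := by
    rw [Polynomial.map_map]
    exact congrArg (map · h) σ.toAlgHom.comp_algebraMap
  have hg_fixed (σ : Gal(K/F)) : g.map (σ : K →+* K) = g :=
    map_eq_self_of_natDegree_maximal hg hgH hmax' _ (hH_fixed σ)
  have hf_fixed (σ : Gal(K/F)) : f.map (σ : K →+* K) = f := by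
    refine mul_right_cancel₀ (pow_ne_zero m hg.ne_zero) ?_
    calc f.map (σ : K →+* K) * g ^ m = (f * g ^ m).map (σ : K →+* K) := by
          rw [Polynomial.map_mul, Polynomial.map_pow, hg_fixed]
      _ = f * g ^ m := by rw [← hfg, hH_fixed]
  exact ⟨exists_eq_map_of_forall_map_eq hf_fixed, exists_eq_map_of_forall_map_eq hg_fixed⟩

/-- Lemma 7.1 ('anypolys') of the paper: if h ∈ F[X] and h̄ = f·g^m over the algebraic
closure with g monic of maximal degree, then f and g are defined over F. -/
theorem stmt_11
    (F : Type*) [Field F] [CharZero F]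
    (m : ℕ) (hm : 2 ≤ m)
    (h : Polynomial F) (hh : h ≠ 0)
    (f g : Polynomial (AlgebraicClosure F)) (hg : g.Monic)
    (hfg : Polynomial.map (algebraMap F (AlgebraicClosure F)) h = f * g ^ m)
    (hmax : ∀ f' g' : Polynomial (AlgebraicClosure F), g'.Monic →
      Polynomial.map (algebraMap F (AlgebraicClosure F)) h = f' * g' ^ m →
      g'.natDegree ≤ g.natDegree) :
    (∃ f₀ : Polynomial F, f = Polynomial.map (algebraMap F (AlgebraicClosure F)) f₀) ∧
    (∃ g₀ : Polynomial F, g = Polynomial.map (algebraMap F (AlgebraicClosure F)) g₀) :=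
  stmt_11_general F m h f g hg hfg hmax
end

section
/- Let F be a field of characteristic zero, let F̄ := AlgebraicClosure F, let m ≥ 2, and let φ ∈ RatFunc F with φ ≠ 0. For a nonzero ρ ∈ RatFunc F̄ and α ∈ F̄, set ord_α(ρ) := (Polynomial.rootMultiplicity α ρ.num : ℤ) − (Polynomial.rootMultiplicity α ρ.denom : ℤ), and let φ̄ ∈ RatFunc F̄ denote the image of φ under coefficient extension along algebraMap F F̄. Then there exist ψ, χ ∈ RatFunc F with ψ ≠ 0 and φ = χ * ψ^m, such that for every α ∈ F̄: if (m : ℤ) ∣ ord_α(φ̄) then ord_α(ψ̄) = ord_α(φ̄) / m, and if ¬ (m : ℤ) ∣ ord_α(φ̄) then ord_α(ψ̄) = 0, where ψ̄ is the image of ψ in RatFunc F̄. -/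
/-- Order of vanishing of a rational function at a point α: root multiplicity of the
numerator minus root multiplicity of the denominator. -/
noncomputable def ordAt {F : Type*} [Field F] (α : F) (ρ : RatFunc F) : ℤ :=
  (Polynomial.rootMultiplicity α ρ.num : ℤ) - (Polynomial.rootMultiplicity α ρ.denom : ℤ)

/-- Coefficient extension of a rational function along the algebra map to the
algebraic closure. -/
noncomputable def ratExt (F : Type*) [Field F] (ρ : RatFunc F) :
    RatFunc (AlgebraicClosure F) :=
  algebraMap (Polynomial (AlgebraicClosure F)) (RatFunc (AlgebraicClosure F))
      (ρ.num.map (algebraMap F (AlgebraicClosure F))) /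
    algebraMap (Polynomial (AlgebraicClosure F)) (RatFunc (AlgebraicClosure F))
      (ρ.denom.map (algebraMap F (AlgebraicClosure F)))

/-!
Over a perfect field `F`, distinct monic irreducible factors of a polynomial `g` are coprime and
separable, so a root `α ∈ F̄` of `g` is a simple root of exactly one of them, `p`, and the order of
`g` at `α` is the multiplicity of `p` in `g`. Raising each monic irreducible factor `p` of the
numerator and denominator of `φ` to the power `(multiplicity of p)/m` when `m` divides it, and
dropping it otherwise, therefore yields `ψ` over `F` with the required orders; since numerator and
denominator are coprime, at most one of them vanishes at `α`.
-/

open Polynomial UniqueFactorizationMonoid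

def Nat.divIfDvd (m n : ℕ) : ℕ :=
  if m ∣ n then n / m else 0

theorem Nat.divIfDvd_sub_divIfDvd (m a b : ℕ) (hab : a = 0 ∨ b = 0) :
    ((m : ℤ) ∣ (a : ℤ) - b → (divIfDvd m a : ℤ) - divIfDvd m b = ((a : ℤ) - b) / m) ∧
      (¬(m : ℤ) ∣ (a : ℤ) - b → (divIfDvd m a : ℤ) - divIfDvd m b = 0) := by
  rcases hab with rfl | rfl
  · by_cases h : m ∣ b <;> simp [divIfDvd, h, Int.natCast_dvd_natCast, Int.neg_ediv_of_dvd]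
  · by_cases h : m ∣ a <;> simp [divIfDvd, h, Int.natCast_dvd_natCast]

namespace Polynomial

variable {K : Type*} [Field K]

theorem rootMultiplicity_prod_pow {ι : Type*} (s : Finset ι) (g : ι → K[X]) (k : ι → ℕ)
    (hg : ∀ i ∈ s, g i ≠ 0) (α : K) :
    rootMultiplicity α (∏ i ∈ s, g i ^ k i) = ∑ i ∈ s, k i * rootMultiplicity α (g i) := by
  classical
  have hne : ∏ i ∈ s, g i ^ k i ≠ 0 :=
    Finset.prod_ne_zero_iff.2 fun i hi => pow_ne_zero _ (hg i hi)
  simp only [← count_roots, roots_prod _ _ hne, Multiset.count_bind, roots_pow,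
    Multiset.count_nsmul, Finset.sum_map_val]

variable {F : Type*} [Field F]

theorem rootMultiplicity_map_eq_zero_or_of_isCoprime {p q : F[X]} (h : IsCoprime p q)
    (f : F →+* K) (α : K) :
    rootMultiplicity α (p.map f) = 0 ∨ rootMultiplicity α (q.map f) = 0 := by
  have := aeval_ne_zero_of_isCoprime (h.map (mapRingHom f)) α
  simp only [coe_aeval_eq_eval, coe_mapRingHom] at this
  exact this.imp (fun h => rootMultiplicity_eq_zero h) (fun h => rootMultiplicity_eq_zero h)

theorem rootMultiplicity_map_eq_one_of_irreducible [PerfectField F] {p : F[X]}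
    (hp : Irreducible p) (f : F →+* K) {α : K} (hα : (p.map f).IsRoot α) :
    rootMultiplicity α (p.map f) = 1 :=
  le_antisymm (rootMultiplicity_le_one_of_separable
      (PerfectField.separable_of_irreducible hp).map α)
    ((rootMultiplicity_pos (map_ne_zero hp.ne_zero)).2 hα)

theorem rootMultiplicity_map_prod_pow_of_isRoot [PerfectField F] (f : F →+* K)
    {s : Finset F[X]} (hirr : ∀ p ∈ s, Irreducible p) (hcop : (s : Set F[X]).Pairwise IsCoprime)
    (k : F[X] → ℕ) {α : K} {p₀ : F[X]} (hp₀ : p₀ ∈ s) (hα : (p₀.map f).IsRoot α) :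
    rootMultiplicity α ((∏ p ∈ s, p ^ k p).map f) = k p₀ := by
  have hroot := rootMultiplicity_map_eq_one_of_irreducible (hirr p₀ hp₀) f hα
  simp_rw [Polynomial.map_prod, Polynomial.map_pow]
  rw [rootMultiplicity_prod_pow _ _ _ fun p hp => map_ne_zero (hirr p hp).ne_zero,
    Finset.sum_eq_single_of_mem p₀ hp₀, hroot, mul_one]
  intro p hp hpp₀
  rw [((rootMultiplicity_map_eq_zero_or_of_isCoprime (hcop hp hp₀ hpp₀) f α).resolve_right
    (by rw [hroot]; exact one_ne_zero)), mul_zero]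

theorem rootMultiplicity_map_prod_pow_of_not_isRoot (f : F →+* K) {s : Finset F[X]}
    (hs : ∀ p ∈ s, p ≠ 0) (k : F[X] → ℕ) {α : K} (hα : ∀ p ∈ s, ¬(p.map f).IsRoot α) :
    rootMultiplicity α ((∏ p ∈ s, p ^ k p).map f) = 0 := by
  simp_rw [Polynomial.map_prod, Polynomial.map_pow]
  rw [rootMultiplicity_prod_pow _ _ _ fun p hp => map_ne_zero (hs p hp)]
  exact Finset.sum_eq_zero fun p hp => by rw [rootMultiplicity_eq_zero (hα p hp), mul_zero]

variable [DecidableEq F]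

theorem pairwise_isCoprime_normalizedFactors (g : F[X]) :
    ((normalizedFactors g).toFinset : Set F[X]).Pairwise IsCoprime := by
  intro p hp q hq hpq
  rw [Finset.mem_coe, Multiset.mem_toFinset] at hp hq
  exact (irreducible_of_normalized_factor p hp).coprime_iff_not_dvd.2
    fun hdvd => hpq (normalizedFactors_eq_of_dvd g p hp q hq hdvd)

theorem rootMultiplicity_map_prod_normalizedFactors_pow [PerfectField F] (f : F →+* K)
    (g : F[X]) {h : ℕ → ℕ} (h0 : h 0 = 0) (α : K) :
    rootMultiplicity α
        ((∏ p ∈ (normalizedFactors g).toFinset, p ^ h ((normalizedFactors g).count p)).map f)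
      = h (rootMultiplicity α (g.map f)) := by
  rcases eq_or_ne g 0 with rfl | hg
  · simp [h0]
  set s := (normalizedFactors g).toFinset
  have hirr : ∀ p ∈ s, Irreducible p := fun p hp =>
    irreducible_of_normalized_factor p (Multiset.mem_toFinset.1 hp)
  have hg_map : rootMultiplicity α (g.map f)
      = rootMultiplicity α ((∏ p ∈ s, p ^ (normalizedFactors g).count p).map f) := by
    classical
    rw [← Finset.prod_multiset_count, ← count_roots, ← count_roots]
    exact congrArg _ ((prod_normalizedFactors hg).map (mapRingHom f)).roots_eq.symm
  by_cases hα : ∃ p ∈ s, (p.map f).IsRoot α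
  · obtain ⟨p₀, hp₀, hα⟩ := hα
    rw [hg_map, rootMultiplicity_map_prod_pow_of_isRoot f hirr
        (pairwise_isCoprime_normalizedFactors g) _ hp₀ hα,
      rootMultiplicity_map_prod_pow_of_isRoot f hirr
        (pairwise_isCoprime_normalizedFactors g) _ hp₀ hα]
  · push Not at hα
    have hne : ∀ p ∈ s, p ≠ 0 := fun p hp => (hirr p hp).ne_zero
    rw [hg_map, rootMultiplicity_map_prod_pow_of_not_isRoot f hne _ hα,
      rootMultiplicity_map_prod_pow_of_not_isRoot f hne _ hα, h0]

noncomputable def mthRootPart (m : ℕ) (g : F[X]) : F[X] :=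
  ∏ p ∈ (normalizedFactors g).toFinset, p ^ Nat.divIfDvd m ((normalizedFactors g).count p)

theorem mthRootPart_ne_zero (m : ℕ) (g : F[X]) : mthRootPart m g ≠ 0 :=
  Finset.prod_ne_zero_iff.2 fun p hp =>
    pow_ne_zero _ (irreducible_of_normalized_factor p (Multiset.mem_toFinset.1 hp)).ne_zero

theorem rootMultiplicity_map_mthRootPart [PerfectField F] (f : F →+* K) (m : ℕ) (g : F[X])
    (α : K) : rootMultiplicity α ((mthRootPart m g).map f)
      = Nat.divIfDvd m (rootMultiplicity α (g.map f)) :=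
  rootMultiplicity_map_prod_normalizedFactors_pow f g (by simp [Nat.divIfDvd]) α

end Polynomial

theorem ordAt_div {K : Type*} [Field K] (α : K) {p q : K[X]} (hp : p ≠ 0) (hq : q ≠ 0) :
    ordAt α (algebraMap K[X] (RatFunc K) p / algebraMap K[X] (RatFunc K) q)
      = (rootMultiplicity α p : ℤ) - rootMultiplicity α q := by
  set ρ := algebraMap K[X] (RatFunc K) p / algebraMap K[X] (RatFunc K) q
  have hρ : ρ.num * q = p * ρ.denom := (RatFunc.num_mul_eq_mul_denom_iff hq).2 rfl
  have hnum : ρ.num ≠ 0 := RatFunc.num_ne_zero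
    (div_ne_zero (RatFunc.algebraMap_ne_zero hp) (RatFunc.algebraMap_ne_zero hq))
  have := congrArg (rootMultiplicity α) hρ
  rw [rootMultiplicity_mul (mul_ne_zero hnum hq),
    rootMultiplicity_mul (mul_ne_zero hp ρ.denom_ne_zero)] at this
  unfold ordAt
  omega

theorem ratExt_div (F : Type*) [Field F] (p : F[X]) {q : F[X]} (hq : q ≠ 0) :
    ratExt F (algebraMap F[X] (RatFunc F) p / algebraMap F[X] (RatFunc F) q)
      = algebraMap (AlgebraicClosure F)[X] (RatFunc (AlgebraicClosure F))
          (p.map (algebraMap F (AlgebraicClosure F))) /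
        algebraMap (AlgebraicClosure F)[X] (RatFunc (AlgebraicClosure F))
          (q.map (algebraMap F (AlgebraicClosure F))) := by
  set ρ := algebraMap F[X] (RatFunc F) p / algebraMap F[X] (RatFunc F) q
  have hρ : ρ.num * q = p * ρ.denom := (RatFunc.num_mul_eq_mul_denom_iff hq).2 rfl
  rw [ratExt, div_eq_div_iff (RatFunc.algebraMap_ne_zero (map_ne_zero ρ.denom_ne_zero))
    (RatFunc.algebraMap_ne_zero (map_ne_zero hq)), ← map_mul, ← map_mul, ← Polynomial.map_mul,
    ← Polynomial.map_mul, hρ]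

theorem ordAt_ratExt_div {F : Type*} [Field F] (α : AlgebraicClosure F) {p q : F[X]}
    (hp : p ≠ 0) (hq : q ≠ 0) :
    ordAt α (ratExt F (algebraMap F[X] (RatFunc F) p / algebraMap F[X] (RatFunc F) q))
      = (rootMultiplicity α (p.map (algebraMap F (AlgebraicClosure F))) : ℤ)
        - rootMultiplicity α (q.map (algebraMap F (AlgebraicClosure F))) := by
  rw [ratExt_div F p hq, ordAt_div α (map_ne_zero hp) (map_ne_zero hq)]

theorem stmt_12_general (F : Type*) [Field F] [CharZero F]
    (m : ℕ)
    (φ : RatFunc F) (hφ : φ ≠ 0) :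
    ∃ ψ χ : RatFunc F, ψ ≠ 0 ∧ φ = χ * ψ ^ m ∧
      ∀ α : AlgebraicClosure F,
        ((m : ℤ) ∣ ordAt α (ratExt F φ) →
          ordAt α (ratExt F ψ) = ordAt α (ratExt F φ) / m) ∧
        (¬ (m : ℤ) ∣ ordAt α (ratExt F φ) →
          ordAt α (ratExt F ψ) = 0) := by
  classical
  have hA := mthRootPart_ne_zero m φ.num
  have hB := mthRootPart_ne_zero m φ.denom
  set ψ := algebraMap F[X] (RatFunc F) (mthRootPart m φ.num) /
    algebraMap F[X] (RatFunc F) (mthRootPart m φ.denom)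
  have hψ : ψ ≠ 0 := div_ne_zero (RatFunc.algebraMap_ne_zero hA) (RatFunc.algebraMap_ne_zero hB)
  refine ⟨ψ, φ / ψ ^ m, hψ, (div_mul_cancel₀ φ (pow_ne_zero m hψ)).symm, fun α => ?_⟩
  have hφ_ord : ordAt α (ratExt F φ) = (rootMultiplicity α (φ.num.map (algebraMap F _)) : ℤ)
      - rootMultiplicity α (φ.denom.map (algebraMap F _)) :=
    ordAt_div α (map_ne_zero (RatFunc.num_ne_zero hφ)) (map_ne_zero φ.denom_ne_zero)
  rw [hφ_ord, ordAt_ratExt_div α hA hB, rootMultiplicity_map_mthRootPart,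
    rootMultiplicity_map_mthRootPart]
  exact Nat.divIfDvd_sub_divIfDvd m _ _
    (rootMultiplicity_map_eq_zero_or_of_isCoprime (RatFunc.isCoprime_num_denom φ) _ α)

/-- Theorem 7.2 ('fieldthm') of the paper: for φ ∈ F(x), the rational function
ψ = ∏ (x − α)^{ord_α(φ)/m} (product over α where m ∣ ord_α(φ)) and the cofactor
χ = φ/ψ^m are both defined over F. -/
theorem stmt_12 (F : Type*) [Field F] [CharZero F]
    (m : ℕ) (hm : 2 ≤ m)
    (φ : RatFunc F) (hφ : φ ≠ 0) :
    ∃ ψ χ : RatFunc F, ψ ≠ 0 ∧ φ = χ * ψ ^ m ∧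
      ∀ α : AlgebraicClosure F,
        ((m : ℤ) ∣ ordAt α (ratExt F φ) →
          ordAt α (ratExt F ψ) = ordAt α (ratExt F φ) / m) ∧
        (¬ (m : ℤ) ∣ ordAt α (ratExt F φ) →
          ordAt α (ratExt F ψ) = 0) :=
  stmt_12_general F m φ hφ
end

section
/- Let K be a number field, m ≥ 2, c ∈ K with c ≠ 0, j a natural number with j ≤ m − 1, and ψ ∈ RatFunc K, and set φ := RatFunc.C c * RatFunc.X^j * ψ^m; assume deg φ := max(φ.num.natDegree, φ.denom.natDegree) ≥ 2. Let Φ : ℕ → RatFunc K be the iterate sequence of φ, let t be the least positive integer such that ∃ b : K, c^t = b^m, and let a ∈ K. Suppose the set V(a) := {x : K | (∃ b : K, x = b^m) ∧ ∃ n : ℕ, (Φ n).denom.eval a ≠ 0 ∧ (Φ n).num.eval a = x * (Φ n).denom.eval a} is infinite. Then Nat.gcd t j = 1, and there exist ℓ : ℕ and M ≥ 1 with M ≤ m such that N(a) := {n : ℕ | (Φ n).denom.eval a = 0 ∨ ∃ b : K, (Φ n).num.eval a = b^m * (Φ n).denom.eval a} = {ℓ + k*M | k : ℕ}; moreover M =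 t if j = 1, and M = orderOf ((j : ZMod (t*(j−1)))) if j ≥ 2. -/
/-!
Write `φ = c X^j ψ^m`, so that `Φ (n+1) = c Φₙ^j (ψ ∘ Φₙ)^m`.

If `0 < j < m`, the order of `Φ (n+1)` at `a` is `(j + m k) · ord_a Φₙ` for some integer `k`
(`ψ ∘ Φₙ` has order `k · ord_a Φₙ`), and `j + m k ≠ 0`. So once an iterate has a zero or a pole
at `a`, all later ones do, and the orbit then has only finitely many nonzero finite values.
Infinitely many `m`-th powers therefore force every `Φₙ` to be a unit at `a`, and the values
`uₙ = Φₙ(a) ≠ 0` satisfy `u (n+k) = c^(Sₖ) uₙ^(j^k) · (m-th power)` with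
`Sₖ = 1 + j + ⋯ + j^(k-1)`. From the first `m`-th power `u ℓ` on, `u (ℓ+k)` is an `m`-th power
iff `t ∣ Sₖ`, i.e. iff `k` is a period of `0` under `x ↦ j x + 1` on `ℤ/t`. The minimal period
`M` is at most `t`; it is `t` when `j = 1`, and the order of `j` modulo `t (j-1)` when `j ≥ 2`,
because `(j-1) Sₖ = j^k - 1`.

If `j = 0`, every finite value `Φ (n+1)(a)` lies in `c K^m`, and one nonzero `m`-th power among
them makes `c` an `m`-th power, so `t = 1` and every `n ≥ 1` belongs to the progression.
-/

open Polynomial IsDedekindDomain Finset Function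

section PowerClasses

variable {G₀ : Type*} [CommGroupWithZero G₀] {m : ℕ}

theorem exists_pow_iff_dvd_of_minimal {c : G₀} (hc : c ≠ 0) {t : ℕ} (ht : 0 < t)
    (hct : ∃ b, c ^ t = b ^ m) (hmin : ∀ t', 0 < t' → (∃ b, c ^ t' = b ^ m) → t ≤ t') (s : ℕ) :
    (∃ d, c ^ s = d ^ m) ↔ t ∣ s := by
  obtain ⟨b, hb⟩ := hct
  constructor
  · rintro ⟨d, hd⟩
    by_contra hdvd
    have hpow : (b ^ (s / t)) ^ m = (c ^ t) ^ (s / t) := by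
      rw [hb, ← pow_mul, ← pow_mul, mul_comm]
    refine (Nat.mod_lt s ht).not_ge (hmin _ (Nat.pos_of_ne_zero (mt Nat.dvd_of_mod_eq_zero hdvd))
      ⟨d / b ^ (s / t), ?_⟩)
    rw [div_pow, hpow, ← hd, eq_div_iff (pow_ne_zero _ (pow_ne_zero _ hc)), ← pow_mul, ← pow_add,
      Nat.mod_add_div]
  · rintro ⟨q, rfl⟩
    exact ⟨b ^ q, by rw [pow_mul, hb, ← pow_mul, ← pow_mul, mul_comm]⟩

theorem exists_pow_iff_of_eq_mul_pow {x y z : G₀} (hz : z ^ m ≠ 0) (h : y = x * z ^ m) :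
    (∃ b, y = b ^ m) ↔ ∃ b, x = b ^ m := by
  subst h
  constructor
  · rintro ⟨b, hb⟩
    exact ⟨b / z, by rw [div_pow, ← hb, mul_div_cancel_right₀ _ hz]⟩
  · rintro ⟨b, rfl⟩
    exact ⟨b * z, (mul_pow b z m).symm⟩

end PowerClasses

theorem exists_eq_pow_geom_sum_mul {M : Type*} [CommMonoid M] {u : ℕ → M} {c : M} {j m : ℕ}
    (hu : ∀ n, ∃ w, u (n + 1) = c * u n ^ j * w ^ m) (n k : ℕ) :
    ∃ z, u (n + k) = c ^ (∑ i ∈ range k, j ^ i) * u n ^ (j ^ k) * z ^ m := by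
  induction k with
  | zero => exact ⟨1, by simp⟩
  | succ k ih =>
    obtain ⟨z, hz⟩ := ih
    obtain ⟨w, hw⟩ := hu (n + k)
    refine ⟨z ^ j * w, ?_⟩
    rw [← add_assoc, hw, hz, geom_sum_succ, pow_succ j k, mul_comm j, pow_add, pow_one, pow_mul,
      pow_mul]
    simp only [mul_pow, ← pow_mul]
    ac_rfl

/-- Horner's step for `∑ i < k, j ^ i`, read modulo `t`. -/
def geomStep (t j : ℕ) (x : ZMod t) : ZMod t := j * x + 1

theorem isPeriodicPt_geomStep_zero_iff (t j k : ℕ) :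
    IsPeriodicPt (geomStep t j) k 0 ↔ t ∣ ∑ i ∈ range k, j ^ i := by
  have hiter : (geomStep t j)^[k] 0 = ((∑ i ∈ range k, j ^ i : ℕ) : ZMod t) := by
    induction k with
    | zero => simp
    | succ k ih => rw [iterate_succ_apply', ih, geom_sum_succ, geomStep]; push_cast; ring
  rw [← ZMod.natCast_eq_zero_iff, ← hiter]
  rfl

theorem coprime_of_dvd_geom_sum {t j k : ℕ} (hk : 0 < k) (h : t ∣ ∑ i ∈ range k, j ^ i) :
    Nat.Coprime t j := by
  obtain ⟨k, rfl⟩ := Nat.exists_eq_add_of_lt hk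
  rw [zero_add, geom_sum_succ] at h
  exact Nat.Coprime.coprime_dvd_left h
    ((Nat.coprime_mul_left_add_left 1 j _).mpr (Nat.coprime_one_left j))

theorem minimalPeriod_geomStep_le (t j : ℕ) [NeZero t] : minimalPeriod (geomStep t j) 0 ≤ t :=
  (minimalPeriod_le_card).trans (ZMod.card t).le

theorem minimalPeriod_geomStep_one (t : ℕ) : minimalPeriod (geomStep t 1) 0 = t :=
  Nat.dvd_right_iff_eq.mp fun k ↦ by
    rw [← isPeriodicPt_iff_minimalPeriod_dvd, isPeriodicPt_geomStep_zero_iff]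
    simp

theorem dvd_geom_sum_iff_pow_eq_one {t j : ℕ} (hj : 2 ≤ j) (k : ℕ) :
    t ∣ ∑ i ∈ range k, j ^ i ↔ (j : ZMod (t * (j - 1))) ^ k = 1 := by
  rw [← Nat.mul_dvd_mul_iff_right (by omega : 0 < j - 1), ← ZMod.natCast_eq_zero_iff,
    Nat.cast_mul, Nat.cast_sub (by omega : 1 ≤ j), Nat.cast_sum]
  push_cast
  rw [geom_sum_mul, sub_eq_zero]

theorem minimalPeriod_geomStep_eq_orderOf (t : ℕ) {j : ℕ} (hj : 2 ≤ j) :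
    minimalPeriod (geomStep t j) 0 = orderOf (j : ZMod (t * (j - 1))) :=
  Nat.dvd_right_iff_eq.mp fun k ↦ by
    rw [← isPeriodicPt_iff_minimalPeriod_dvd, isPeriodicPt_geomStep_zero_iff,
      orderOf_dvd_iff_pow_eq_one, dvd_geom_sum_iff_pow_eq_one hj]

theorem setOf_eq_progression {P : ℕ → Prop} {ℓ M : ℕ} (hmin : ∀ n, P n → ℓ ≤ n)
    (hstep : ∀ k, P (ℓ + k) ↔ M ∣ k) : {n | P n} = {n | ∃ k, n = ℓ + k * M} := by
  ext n
  constructor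
  · intro hn
    obtain ⟨q, hq⟩ := (hstep (n - ℓ)).mp (by rwa [Nat.add_sub_cancel' (hmin n hn)])
    exact ⟨q, by rw [mul_comm]; have := hmin n hn; omega⟩
  · rintro ⟨k, rfl⟩
    exact (hstep _).mpr (dvd_mul_left M k)

theorem progression_of_mul_pow_recurrence {K : Type*} [Field K] {u : ℕ → K} {c : K} {j m t : ℕ}
    (hu0 : ∀ n, u n ≠ 0) (hu : ∀ n, ∃ w, u (n + 1) = c * u n ^ j * w ^ m) (hc : c ≠ 0)
    (ht : 0 < t) (hct : ∃ b, c ^ t = b ^ m)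
    (hmin : ∀ t', 0 < t' → (∃ b, c ^ t' = b ^ m) → t ≤ t')
    (hP : {n | ∃ b, u n = b ^ m}.Nontrivial) :
    Nat.Coprime t j ∧ 0 < minimalPeriod (geomStep t j) 0 ∧
      ∃ ℓ, {n | ∃ b, u n = b ^ m} = {n | ∃ k, n = ℓ + k * minimalPeriod (geomStep t j) 0} := by
  classical
  have hstep : ∀ n, (∃ b, u n = b ^ m) →
      ∀ k, (∃ b, u (n + k) = b ^ m) ↔ IsPeriodicPt (geomStep t j) k 0 := by
    rintro n ⟨b, hb⟩ k
    obtain ⟨z, hz⟩ := exists_eq_pow_geom_sum_mul hu n k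
    rw [hb, ← pow_mul, mul_comm m, pow_mul, mul_assoc, ← mul_pow] at hz
    rw [exists_pow_iff_of_eq_mul_pow (right_ne_zero_of_mul (hz ▸ hu0 (n + k))) hz,
      exists_pow_iff_dvd_of_minimal hc ht hct hmin, isPeriodicPt_geomStep_zero_iff]
  obtain ⟨n₁, h₁, n₂, h₂, hne⟩ := hP
  wlog hlt : n₁ < n₂ generalizing n₁ n₂
  · exact this n₂ h₂ n₁ h₁ hne.symm (hne.symm.lt_of_le (not_lt.mp hlt))
  have hper : IsPeriodicPt (geomStep t j) (n₂ - n₁) 0 :=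
    (hstep n₁ h₁ _).mp (by rwa [Nat.add_sub_cancel' hlt.le])
  have hpos : 0 < n₂ - n₁ := Nat.sub_pos_of_lt hlt
  refine ⟨coprime_of_dvd_geom_sum hpos ((isPeriodicPt_geomStep_zero_iff ..).mp hper),
    hper.minimalPeriod_pos hpos, Nat.find ⟨n₁, h₁⟩,
    setOf_eq_progression (fun n hn ↦ Nat.find_min' _ hn) fun k ↦ ?_⟩
  exact (hstep _ (Nat.find_spec ⟨n₁, h₁⟩) k).trans isPeriodicPt_iff_minimalPeriod_dvd

namespace RatFunc

variable {K : Type*} [Field K]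

/-- Composition `f ↦ f ∘ g` with a nonconstant rational function `g`. -/
noncomputable def compAlgHom (g : RatFunc K) (hg : Transcendental K g) :
    RatFunc K →ₐ[K] RatFunc K :=
  liftAlgHom (aeval g)
    (nonZeroDivisors_le_comap_nonZeroDivisors_of_injective _ (transcendental_iff_injective.mp hg))

theorem compAlgHom_apply {g : RatFunc K} (hg : Transcendental K g) (f : RatFunc K) :
    compAlgHom g hg f = aeval g f.num / aeval g f.denom :=
  liftAlgHom_apply _ _ f

theorem compAlgHom_X {g : RatFunc K} (hg : Transcendental K g) : compAlgHom g hg X = g := by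
  simp [compAlgHom_apply]

theorem compAlgHom_injective {g : RatFunc K} (hg : Transcendental K g) :
    Function.Injective (compAlgHom g hg) :=
  liftAlgHom_injective _ (transcendental_iff_injective.mp hg)

theorem transcendental_compAlgHom {g : RatFunc K} (hg : Transcendental K g) {f : RatFunc K}
    (hf : Transcendental K f) : Transcendental K (compAlgHom g hg f) :=
  mt (isAlgebraic_algHom_iff _ (compAlgHom_injective hg)).mp hf

theorem compAlgHom_C {g : RatFunc K} (hg : Transcendental K g) (k : K) :
    compAlgHom g hg (C k) = C k := by
  rw [← algebraMap_eq_C, AlgHom.commutes]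

theorem ne_zero_of_transcendental {g : RatFunc K} (hg : Transcendental K g) : g ≠ 0 := by
  rintro rfl
  exact hg isAlgebraic_zero

end RatFunc

noncomputable def Polynomial.heightOneSpectrumAt {K : Type*} [Field K] (a : K) :
    HeightOneSpectrum K[X] where
  asIdeal := Ideal.span {X - C a}
  isPrime := (Ideal.span_singleton_prime (X_sub_C_ne_zero a)).mpr (prime_X_sub_C a)
  ne_bot := by
    rw [ne_eq, Ideal.span_singleton_eq_bot]
    exact X_sub_C_ne_zero a

namespace RatFunc

variable {K : Type*} [Field K]

noncomputable def valuationAt (a : K) : Valuation (RatFunc K) (WithZero (Multiplicative ℤ)) :=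
  (heightOneSpectrumAt a).valuation (RatFunc K)

theorem valuationAt_algebraMap_le_one (a : K) (p : K[X]) :
    valuationAt a (algebraMap K[X] (RatFunc K) p) ≤ 1 :=
  (heightOneSpectrumAt a).valuation_le_one p

theorem valuationAt_algebraMap_lt_one_iff (a : K) (p : K[X]) :
    valuationAt a (algebraMap K[X] (RatFunc K) p) < 1 ↔ Polynomial.eval a p = 0 := by
  rw [valuationAt, HeightOneSpectrum.valuation_lt_one_iff_mem, heightOneSpectrumAt,
    Ideal.mem_span_singleton, dvd_iff_isRoot, IsRoot.def]

theorem valuationAt_algebraMap_eq_one_iff (a : K) (p : K[X]) :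
    valuationAt a (algebraMap K[X] (RatFunc K) p) = 1 ↔ Polynomial.eval a p ≠ 0 := by
  rw [ne_eq, ← valuationAt_algebraMap_lt_one_iff, (valuationAt_algebraMap_le_one a p).lt_iff_ne,
    not_not]

theorem valuationAt_C (a : K) {k : K} (hk : k ≠ 0) : valuationAt a (C k) = 1 := by
  rw [← algebraMap_C, valuationAt_algebraMap_eq_one_iff, Polynomial.eval_C]
  exact hk

theorem eval_num_ne_zero_or_eval_denom_ne_zero (a : K) (f : RatFunc K) :
    Polynomial.eval a f.num ≠ 0 ∨ Polynomial.eval a f.denom ≠ 0 := by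
  obtain ⟨u, w, h⟩ := f.isCoprime_num_denom
  by_contra! hz
  simpa [hz.1, hz.2] using congrArg (Polynomial.eval a) h

theorem valuationAt_eq_div (a : K) (f : RatFunc K) :
    valuationAt a f = valuationAt a (algebraMap K[X] (RatFunc K) f.num) /
      valuationAt a (algebraMap K[X] (RatFunc K) f.denom) := by
  rw [← map_div₀, num_div_denom]

theorem valuationAt_le_one_iff (a : K) (f : RatFunc K) :
    valuationAt a f ≤ 1 ↔ Polynomial.eval a f.denom ≠ 0 := by
  have hd : 0 < valuationAt a (algebraMap K[X] (RatFunc K) f.denom) :=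
    (Valuation.pos_iff _).mpr (algebraMap_ne_zero f.denom_ne_zero)
  rw [valuationAt_eq_div, div_le_one₀ hd]
  by_cases hden : Polynomial.eval a f.denom = 0
  · have hnum := (eval_num_ne_zero_or_eval_denom_ne_zero a f).resolve_right (not_not.mpr hden)
    rw [(valuationAt_algebraMap_eq_one_iff a _).mpr hnum]
    simpa [hden] using (valuationAt_algebraMap_lt_one_iff a f.denom).mpr hden
  · rw [(valuationAt_algebraMap_eq_one_iff a _).mpr hden]
    simpa [hden] using valuationAt_algebraMap_le_one a f.num

theorem valuationAt_lt_one_iff (a : K) (f : RatFunc K) :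
    valuationAt a f < 1 ↔ Polynomial.eval a f.num = 0 := by
  have hd : 0 < valuationAt a (algebraMap K[X] (RatFunc K) f.denom) :=
    (Valuation.pos_iff _).mpr (algebraMap_ne_zero f.denom_ne_zero)
  rw [valuationAt_eq_div, div_lt_one₀ hd]
  by_cases hnum : Polynomial.eval a f.num = 0
  · have hden := (eval_num_ne_zero_or_eval_denom_ne_zero a f).resolve_left (not_not.mpr hnum)
    rw [(valuationAt_algebraMap_eq_one_iff a _).mpr hden]
    simpa [hnum] using (valuationAt_algebraMap_lt_one_iff a f.num).mpr hnum
  · rw [(valuationAt_algebraMap_eq_one_iff a _).mpr hnum]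
    simpa [hnum] using valuationAt_algebraMap_le_one a f.denom

theorem valuationAt_eq_one_iff (a : K) (f : RatFunc K) :
    valuationAt a f = 1 ↔ Polynomial.eval a f.num ≠ 0 ∧ Polynomial.eval a f.denom ≠ 0 := by
  rw [← valuationAt_le_one_iff, ne_eq, ← valuationAt_lt_one_iff, not_lt, and_comm,
    ← le_antisymm_iff]

theorem eval_id_eq_div (a : K) (f : RatFunc K) :
    eval (RingHom.id K) a f = Polynomial.eval a f.num / Polynomial.eval a f.denom :=
  rfl

theorem eval_id_eq_iff {a x : K} {f : RatFunc K} (hd : Polynomial.eval a f.denom ≠ 0) :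
    eval (RingHom.id K) a f = x ↔ Polynomial.eval a f.num = x * Polynomial.eval a f.denom := by
  rw [eval_id_eq_div, div_eq_iff hd]

theorem eval_mul_of_valuationAt_le_one {a : K} {f g : RatFunc K} (hf : valuationAt a f ≤ 1)
    (hg : valuationAt a g ≤ 1) :
    eval (RingHom.id K) a (f * g) = eval (RingHom.id K) a f * eval (RingHom.id K) a g :=
  eval_mul (RingHom.id K) a ((valuationAt_le_one_iff a f).mp hf)
    ((valuationAt_le_one_iff a g).mp hg)

theorem eval_pow_of_valuationAt_le_one {a : K} {f : RatFunc K} (hf : valuationAt a f ≤ 1)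
    (n : ℕ) : eval (RingHom.id K) a (f ^ n) = eval (RingHom.id K) a f ^ n := by
  induction n with
  | zero => simp
  | succ n ih =>
    rw [pow_succ, eval_mul_of_valuationAt_le_one (by rw [map_pow]; exact pow_le_one' hf n) hf, ih,
      pow_succ]

theorem eval_ne_zero_of_valuationAt_eq_one {a : K} {f : RatFunc K} (h : valuationAt a f = 1) :
    eval (RingHom.id K) a f ≠ 0 := by
  obtain ⟨hn, hd⟩ := (valuationAt_eq_one_iff a f).mp h
  exact div_ne_zero hn hd

theorem eval_C_mul_mul_pow {a c : K} (hc : c ≠ 0) {m : ℕ} (hm : m ≠ 0) {g h : RatFunc K}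
    (hg : valuationAt a g = 1) (hf : valuationAt a (C c * g * h ^ m) ≤ 1) :
    eval (RingHom.id K) a (C c * g * h ^ m) =
      c * eval (RingHom.id K) a g * eval (RingHom.id K) a h ^ m := by
  have hCg : valuationAt a (C c * g) = 1 := by rw [map_mul, valuationAt_C a hc, hg, one_mul]
  rw [map_mul, hCg, one_mul, map_pow, pow_le_one_iff_of_nonneg zero_le hm] at hf
  rw [eval_mul_of_valuationAt_le_one hCg.le (by rw [map_pow]; exact pow_le_one' hf m),
    eval_mul_of_valuationAt_le_one (valuationAt_C a hc).le hg.le, eval_C,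
    eval_pow_of_valuationAt_le_one hf]
  rfl

section Valuation

variable {Γ₀ : Type*} [LinearOrderedCommGroupWithZero Γ₀] {v : Valuation (RatFunc K) Γ₀}

theorem valuation_aeval_eq_pow (hv : ∀ k : K, k ≠ 0 → v (C k) = 1) {g : RatFunc K} (hg : g ≠ 0)
    {P : K[X]} {i₀ : ℕ} (h₀ : P.coeff i₀ ≠ 0)
    (hlt : ∀ i, i ≠ i₀ → P.coeff i ≠ 0 → v g ^ i < v g ^ i₀) :
    v (aeval g P) = v g ^ i₀ := by
  classical
  have hterm (i : ℕ) : v (P.coeff i • g ^ i) = if P.coeff i = 0 then 0 else v g ^ i := by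
    split_ifs with h
    · simp [h]
    · rw [Algebra.smul_def, algebraMap_eq_C, map_mul, hv _ h, one_mul, map_pow]
  rw [aeval_eq_sum_range, Valuation.map_sum_eq_of_lt v (j := i₀)
    (Finset.mem_range_succ_iff.mpr (le_natDegree_of_ne_zero h₀)), hterm, if_neg h₀]
  intro i hi
  rw [Finset.mem_sdiff, Finset.mem_singleton] at hi
  rw [hterm, hterm, if_neg h₀]
  split_ifs with h
  · exact pow_pos ((Valuation.pos_iff v).mpr hg) _
  · exact hlt i hi.2 h

theorem exists_valuation_aeval_eq_pow (hv : ∀ k : K, k ≠ 0 → v (C k) = 1) {g : RatFunc K}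
    (hg : g ≠ 0) (hg1 : v g ≠ 1) {P : K[X]} (hP : P ≠ 0) : ∃ k : ℕ, v (aeval g P) = v g ^ k := by
  have hpos : 0 < v g := (Valuation.pos_iff v).mpr hg
  rcases hg1.lt_or_gt with hlt | hgt
  · refine ⟨P.natTrailingDegree, valuation_aeval_eq_pow hv hg
      (trailingCoeff_nonzero_iff_nonzero.mpr hP) fun i hi hc ↦ ?_⟩
    exact pow_lt_pow_right_of_lt_one₀ hpos hlt
      ((natTrailingDegree_le_of_ne_zero hc).lt_of_ne' hi)
  · refine ⟨P.natDegree, valuation_aeval_eq_pow hv hg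
      (leadingCoeff_ne_zero.mpr hP) fun i hi hc ↦ ?_⟩
    exact pow_lt_pow_right₀ hgt ((le_natDegree_of_ne_zero hc).lt_of_ne hi)

theorem exists_valuation_compAlgHom_eq_zpow (hv : ∀ k : K, k ≠ 0 → v (C k) = 1)
    {g : RatFunc K} (hg : Transcendental K g) (hg1 : v g ≠ 1) {f : RatFunc K} (hf : f ≠ 0) :
    ∃ k : ℤ, v (compAlgHom g hg f) = v g ^ k := by
  have hg0 : g ≠ 0 := ne_zero_of_transcendental hg
  obtain ⟨p, hp⟩ := exists_valuation_aeval_eq_pow hv hg0 hg1 (num_ne_zero hf)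
  obtain ⟨q, hq⟩ := exists_valuation_aeval_eq_pow hv hg0 hg1 f.denom_ne_zero
  refine ⟨p - q, ?_⟩
  rw [compAlgHom_apply, map_div₀, hp, hq, zpow_sub₀ ((Valuation.ne_zero_iff v).mpr hg0),
    zpow_natCast, zpow_natCast]

theorem valuation_C_mul_pow_mul_compAlgHom_pow_ne_one (hv : ∀ k : K, k ≠ 0 → v (C k) = 1)
    {g : RatFunc K} (hg : Transcendental K g) (hg1 : v g ≠ 1) {f : RatFunc K} (hf : f ≠ 0)
    {c : K} (hc : c ≠ 0) {j m : ℕ} (hj : 0 < j) (hjm : j < m) :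
    v (C c * g ^ j * compAlgHom g hg f ^ m) ≠ 1 := by
  obtain ⟨k, hk⟩ := exists_valuation_compAlgHom_eq_zpow hv hg hg1 hf
  have hexp : (j : ℤ) + k * m ≠ 0 := by
    rcases lt_trichotomy k 0 with h | rfl | h <;> nlinarith
  rw [map_mul, map_mul, hv c hc, one_mul, map_pow, map_pow, hk, ← zpow_natCast, ← zpow_natCast,
    ← zpow_mul, ← zpow_add₀ ((Valuation.ne_zero_iff v).mpr (ne_zero_of_transcendental hg))]
  exact (zpow_eq_one_iff_right₀ zero_le hg1).not.mpr hexp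

end Valuation

theorem transcendental_of_iterate {φ : RatFunc K} (hφ : Transcendental K φ) {Φ : ℕ → RatFunc K}
    (hΦ0 : Φ 0 = X) (hΦit : ∀ n, Φ (n + 1) = aeval (Φ n) φ.num / aeval (Φ n) φ.denom) :
    ∀ n, Transcendental K (Φ n)
  | 0 => hΦ0 ▸ transcendental_X
  | n + 1 => by
    have ih := transcendental_of_iterate hφ hΦ0 hΦit n
    rw [hΦit, ← compAlgHom_apply ih]
    exact transcendental_compAlgHom ih hφ

theorem valuationAt_eq_one_of_infinite {Φ : ℕ → RatFunc K} {a : K}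
    (hstep : ∀ n, valuationAt a (Φ n) ≠ 1 → valuationAt a (Φ (n + 1)) ≠ 1)
    (hV : {x : K | ∃ n, Polynomial.eval a (Φ n).denom ≠ 0 ∧
      Polynomial.eval a (Φ n).num = x * Polynomial.eval a (Φ n).denom}.Infinite) (n : ℕ) :
    valuationAt a (Φ n) = 1 := by
  by_contra hn
  have hlater (i : ℕ) (hi : n ≤ i) : valuationAt a (Φ i) ≠ 1 :=
    Nat.le_induction hn (fun k _ ↦ hstep k) i hi
  refine hV ((((Set.finite_Iio n).image fun i ↦ eval (RingHom.id K) a (Φ i)).insert 0).subset ?_)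
  rintro x ⟨i, hd, hx⟩
  rcases lt_or_ge i n with hi | hi
  · exact Or.inr ⟨i, hi, (eval_id_eq_iff hd).mpr hx⟩
  · have hnum : Polynomial.eval a (Φ i).num = 0 := (valuationAt_lt_one_iff a _).mp
      (((valuationAt_le_one_iff a _).mpr hd).lt_of_ne (hlater i hi))
    rw [hnum, eq_comm, mul_eq_zero] at hx
    exact Or.inl (hx.resolve_right hd)

theorem trivialMap_progression_of_pos {m j t : ℕ} {c a : K} {ψ : RatFunc K}
    {Φ : ℕ → RatFunc K} (hΦ : ∀ n, Transcendental K (Φ n))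
    (hΦsucc : ∀ n, Φ (n + 1) = C c * Φ n ^ j * compAlgHom (Φ n) (hΦ n) ψ ^ m)
    (hψ : ψ ≠ 0) (hc : c ≠ 0) (hj : 0 < j) (hjm : j < m) (ht : 0 < t)
    (hct : ∃ b, c ^ t = b ^ m) (hmin : ∀ t', 0 < t' → (∃ b, c ^ t' = b ^ m) → t ≤ t')
    (hV : {x : K | (∃ b, x = b ^ m) ∧ ∃ n, Polynomial.eval a (Φ n).denom ≠ 0 ∧
      Polynomial.eval a (Φ n).num = x * Polynomial.eval a (Φ n).denom}.Infinite) :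
    Nat.Coprime t j ∧ 0 < minimalPeriod (geomStep t j) 0 ∧
      ∃ ℓ, {n | Polynomial.eval a (Φ n).denom = 0 ∨
        ∃ b, Polynomial.eval a (Φ n).num = b ^ m * Polynomial.eval a (Φ n).denom} =
        {n | ∃ k, n = ℓ + k * minimalPeriod (geomStep t j) 0} := by
  have hv : ∀ n, valuationAt a (Φ n) = 1 := by
    refine valuationAt_eq_one_of_infinite (fun n hn ↦ ?_) (hV.mono fun x hx ↦ hx.2)
    rw [hΦsucc]
    exact valuation_C_mul_pow_mul_compAlgHom_pow_ne_one (fun _ ↦ valuationAt_C a) (hΦ n) hn hψ hc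
      hj hjm
  have hden (n : ℕ) : Polynomial.eval a (Φ n).denom ≠ 0 :=
    ((valuationAt_eq_one_iff a _).mp (hv n)).2
  set u : ℕ → K := fun n ↦ eval (RingHom.id K) a (Φ n) with hu_def
  have hu (n : ℕ) : ∃ w, u (n + 1) = c * u n ^ j * w ^ m := by
    refine ⟨eval (RingHom.id K) a (compAlgHom (Φ n) (hΦ n) ψ), ?_⟩
    simp only [hu_def]
    rw [hΦsucc, eval_C_mul_mul_pow hc (by omega) (by rw [map_pow, hv n, one_pow])
      (by rw [← hΦsucc, hv]), eval_pow_of_valuationAt_le_one (hv n).le]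
  have hN : {n | Polynomial.eval a (Φ n).denom = 0 ∨
      ∃ b, Polynomial.eval a (Φ n).num = b ^ m * Polynomial.eval a (Φ n).denom} =
      {n | ∃ b, u n = b ^ m} := by
    ext n
    simp only [Set.mem_ofPred_eq, hden n, false_or, hu_def, eval_id_eq_iff (hden n)]
  have hP : {n | ∃ b, u n = b ^ m}.Nontrivial := by
    refine Set.nontrivial_of_image u _ (hV.nontrivial.mono ?_)
    rintro x ⟨⟨b, rfl⟩, n, hd, hx⟩
    exact ⟨n, ⟨b, (eval_id_eq_iff hd).mpr hx⟩, (eval_id_eq_iff hd).mpr hx⟩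
  rw [hN]
  exact progression_of_mul_pow_recurrence (fun n ↦ eval_ne_zero_of_valuationAt_eq_one (hv n)) hu
    hc ht hct hmin hP

theorem trivialMap_progression_of_zero {m t : ℕ} {c a : K} {ψ : RatFunc K}
    {Φ : ℕ → RatFunc K} (hΦ : ∀ n, Transcendental K (Φ n)) (hΦ0 : Φ 0 = X)
    (hΦsucc : ∀ n, Φ (n + 1) = C c * Φ n ^ 0 * compAlgHom (Φ n) (hΦ n) ψ ^ m)
    (hc : c ≠ 0) (hm : m ≠ 0) (ht : 0 < t)
    (hmin : ∀ t', 0 < t' → (∃ b, c ^ t' = b ^ m) → t ≤ t')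
    (hV : {x : K | (∃ b, x = b ^ m) ∧ ∃ n, Polynomial.eval a (Φ n).denom ≠ 0 ∧
      Polynomial.eval a (Φ n).num = x * Polynomial.eval a (Φ n).denom}.Infinite) :
    t = 1 ∧ ∃ ℓ, {n | Polynomial.eval a (Φ n).denom = 0 ∨
        ∃ b, Polynomial.eval a (Φ n).num = b ^ m * Polynomial.eval a (Φ n).denom} =
        {n | ∃ k, n = ℓ + k * 1} := by
  have hval (n : ℕ) (hd : Polynomial.eval a (Φ (n + 1)).denom ≠ 0) :
      ∃ w, eval (RingHom.id K) a (Φ (n + 1)) = c * w ^ m := by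
    refine ⟨eval (RingHom.id K) a (compAlgHom (Φ n) (hΦ n) ψ), ?_⟩
    have hle : valuationAt a (Φ (n + 1)) ≤ 1 := (valuationAt_le_one_iff a _).mpr hd
    rw [hΦsucc] at hle ⊢
    rw [eval_C_mul_mul_pow hc hm (by rw [pow_zero, map_one]) hle, pow_zero, eval_one, mul_one]
  obtain ⟨b₀, hb₀⟩ : ∃ b, c = b ^ m := by
    obtain ⟨x, ⟨⟨b, rfl⟩, n, hd, hx⟩, hxa⟩ :=
      (hV.sdiff ((Set.finite_singleton a).insert 0)).nonempty
    simp only [Set.mem_insert_iff, Set.mem_singleton_iff, not_or] at hxa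
    rw [← eval_id_eq_iff hd] at hx
    cases n with
    | zero => exact absurd (by rwa [hΦ0, eval_X] at hx) (Ne.symm hxa.2)
    | succ n =>
      obtain ⟨w, hw⟩ := hval n hd
      rw [hx] at hw
      exact (exists_pow_iff_of_eq_mul_pow (right_ne_zero_of_mul (hw ▸ hxa.1)) hw).mp ⟨b, rfl⟩
  refine ⟨le_antisymm (hmin 1 one_pos ⟨b₀, by rw [pow_one, hb₀]⟩) ht, ?_⟩
  have hmem (n : ℕ) : Polynomial.eval a (Φ (n + 1)).denom = 0 ∨
      ∃ b, Polynomial.eval a (Φ (n + 1)).num = b ^ m * Polynomial.eval a (Φ (n + 1)).denom := by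
    refine or_iff_not_imp_left.mpr fun hd ↦ ?_
    obtain ⟨w, hw⟩ := hval n hd
    exact ⟨b₀ * w, by rw [← eval_id_eq_iff hd, hw, hb₀, mul_pow]⟩
  have hmem0 : (Polynomial.eval a (Φ 0).denom = 0 ∨
      ∃ b, Polynomial.eval a (Φ 0).num = b ^ m * Polynomial.eval a (Φ 0).denom) ↔
      ∃ b, a = b ^ m := by
    simp [hΦ0]
  by_cases ha : ∃ b, a = b ^ m
  · refine ⟨0, setOf_eq_progression (fun n _ ↦ n.zero_le) fun k ↦ iff_of_true ?_ (one_dvd k)⟩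
    rw [zero_add]
    cases k with
    | zero => exact hmem0.mpr ha
    | succ k => exact hmem k
  · refine ⟨1, setOf_eq_progression (fun n hn ↦ ?_) fun k ↦ iff_of_true ?_ (one_dvd k)⟩
    · cases n with
      | zero => exact absurd (hmem0.mp hn) ha
      | succ n => exact n.succ_pos
    · rw [add_comm]
      exact hmem k

end RatFunc

theorem stmt_15_general
    (K : Type*) [Field K]
    (m : ℕ) (hm : 2 ≤ m)
    (c : K) (hc : c ≠ 0) (j : ℕ) (hj : j ≤ m - 1) (ψ : RatFunc K)
    (φ : RatFunc K) (hφ : φ = RatFunc.C c * RatFunc.X ^ j * ψ ^ m)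
    (hdeg : 2 ≤ max φ.num.natDegree φ.denom.natDegree)
    (Φ : ℕ → RatFunc K)
    (hΦ0 : Φ 0 = RatFunc.X)
    (hΦit : ∀ n, Φ (n + 1) =
      Polynomial.aeval (Φ n) φ.num / Polynomial.aeval (Φ n) φ.denom)
    (t : ℕ) (ht1 : 1 ≤ t) (ht2 : ∃ b : K, c ^ t = b ^ m)
    (ht3 : ∀ t' : ℕ, 1 ≤ t' → (∃ b : K, c ^ t' = b ^ m) → t ≤ t')
    (a : K)
    (hV : {x : K | (∃ b : K, x = b ^ m) ∧ ∃ n : ℕ,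
      Polynomial.eval a (Φ n).denom ≠ 0 ∧
      Polynomial.eval a (Φ n).num = x * Polynomial.eval a (Φ n).denom}.Infinite) :
    Nat.gcd t j = 1 ∧
    ∃ ℓ M : ℕ, 1 ≤ M ∧ M ≤ m ∧
      {n : ℕ | Polynomial.eval a (Φ n).denom = 0 ∨
        ∃ b : K, Polynomial.eval a (Φ n).num = b ^ m * Polynomial.eval a (Φ n).denom}
        = {n : ℕ | ∃ k : ℕ, n = ℓ + k * M} ∧
      (j = 1 → M = t) ∧
      (2 ≤ j → M = orderOf ((j : ZMod (t * (j - 1))))) := by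
  have hφT : Transcendental K φ := RatFunc.transcendental_of_ne_C φ fun ⟨k, hk⟩ ↦ by
    simp [hk] at hdeg
  have hψ : ψ ≠ 0 := by
    rintro rfl
    exact RatFunc.ne_zero_of_transcendental hφT (by rw [hφ, zero_pow (by omega), mul_zero])
  have hΦ := RatFunc.transcendental_of_iterate hφT hΦ0 hΦit
  have hΦsucc (n : ℕ) :
      Φ (n + 1) = RatFunc.C c * Φ n ^ j * RatFunc.compAlgHom (Φ n) (hΦ n) ψ ^ m := by
    rw [hΦit, ← RatFunc.compAlgHom_apply (hΦ n), hφ, map_mul, map_mul, map_pow, map_pow,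
      RatFunc.compAlgHom_X, RatFunc.compAlgHom_C]
  have htm : t ≤ m := ht3 m (by omega) ⟨c, rfl⟩
  rcases Nat.eq_zero_or_pos j with rfl | hj0
  · obtain ⟨rfl, ℓ, hN⟩ :=
      RatFunc.trivialMap_progression_of_zero hΦ hΦ0 hΦsucc hc (by omega) ht1 ht3 hV
    exact ⟨Nat.gcd_zero_right 1, ℓ, 1, le_rfl, by omega, hN, by omega, by omega⟩
  · have : NeZero t := ⟨by omega⟩
    obtain ⟨hcop, hM, ℓ, hN⟩ :=
      RatFunc.trivialMap_progression_of_pos hΦ hΦsucc hψ hc hj0 (by omega) ht1 ht2 ht3 hV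
    refine ⟨hcop, ℓ, _, hM, (minimalPeriod_geomStep_le t j).trans htm, hN, ?_, ?_⟩
    · rintro rfl
      exact minimalPeriod_geomStep_one t
    · exact minimalPeriod_geomStep_eq_orderOf t

/-- Proposition 9.1 ('trivial case converse') of the paper: for trivial maps
φ = c·x^j·ψ(x)^m with an orbit containing infinitely many m-th powers, gcd(t, j) = 1
and the index set of m-th powers (together with ∞) in the orbit is a single arithmetic
progression of explicitly determined modulus M ≤ m. -/
theorem stmt_15
    (K : Type*) [Field K] [NumberField K]
    (m : ℕ) (hm : 2 ≤ m)
    (c : K) (hc : c ≠ 0) (j : ℕ) (hj : j ≤ m - 1) (ψ : RatFunc K)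
    (φ : RatFunc K) (hφ : φ = RatFunc.C c * RatFunc.X ^ j * ψ ^ m)
    (hdeg : 2 ≤ max φ.num.natDegree φ.denom.natDegree)
    (Φ : ℕ → RatFunc K)
    (hΦ0 : Φ 0 = RatFunc.X)
    (hΦit : ∀ n, Φ (n + 1) =
      Polynomial.aeval (Φ n) φ.num / Polynomial.aeval (Φ n) φ.denom)
    (t : ℕ) (ht1 : 1 ≤ t) (ht2 : ∃ b : K, c ^ t = b ^ m)
    (ht3 : ∀ t' : ℕ, 1 ≤ t' → (∃ b : K, c ^ t' = b ^ m) → t ≤ t')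
    (a : K)
    (hV : {x : K | (∃ b : K, x = b ^ m) ∧ ∃ n : ℕ,
      Polynomial.eval a (Φ n).denom ≠ 0 ∧
      Polynomial.eval a (Φ n).num = x * Polynomial.eval a (Φ n).denom}.Infinite) :
    Nat.gcd t j = 1 ∧
    ∃ ℓ M : ℕ, 1 ≤ M ∧ M ≤ m ∧
      {n : ℕ | Polynomial.eval a (Φ n).denom = 0 ∨
        ∃ b : K, Polynomial.eval a (Φ n).num = b ^ m * Polynomial.eval a (Φ n).denom}
        = {n : ℕ | ∃ k : ℕ, n = ℓ + k * M} ∧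
      (j = 1 → M = t) ∧
      (2 ≤ j → M = orderOf ((j : ZMod (t * (j - 1))))) :=
  stmt_15_general K m hm c hc j hj ψ φ hφ hdeg Φ hΦ0 hΦit t ht1 ht2 ht3 a hV
end

section
/- Let j ≥ 2 and t ≥ 1 be natural numbers with Nat.Coprime j t, and let M := orderOf ((j : ZMod (t*(j−1)))). Then M ≤ t, and for every natural number u ≥ 1, t divides ∑_{i=0}^{u−1} j^i (i.e. t ∣ (Finset.range u).sum (fun i => j^i)) if and only if M ∣ u. -/
/-!
Write `j = m + 1`. The geometric sum identity `j ^ u = 1 + m * (1 + j + ⋯ + j ^ (u - 1))` shows that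
`j ^ u ≡ 1 [MOD t * m]` exactly when `t` divides the sum, which is the divisibility criterion. It also
shows that modulo `t * m` every power of `j` is of the form `1 + m * k` with `k < t`, so `j` has at
most `t` distinct powers and hence order at most `t`.
-/

open Finset

theorem orderOf_le_card_of_forall_pow_mem {G : Type*} [Monoid G] [DecidableEq G] {x : G}
    {s : Finset G} (h : ∀ i, x ^ i ∈ s) : orderOf x ≤ #s :=
  calc orderOf x = #((range (orderOf x)).image (x ^ ·)) := by
        rw [card_image_of_injOn, card_range]
        intro a ha b hb
        exact pow_injOn_Iio_orderOf (by simpa using ha) (by simpa using hb)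
    _ ≤ #s := card_le_card fun y hy => by
        obtain ⟨i, -, rfl⟩ := mem_image.1 hy
        exact h i

theorem natCast_succ_pow_eq_one_add_mul (t m i : ℕ) :
    ((m + 1 : ℕ) : ZMod (t * m)) ^ i =
      1 + m * (((∑ l ∈ range i, (m + 1) ^ l) % t : ℕ) : ZMod (t * m)) := by
  have hmod : ((m * ((∑ l ∈ range i, (m + 1) ^ l) % t) : ℕ) : ZMod (t * m)) =
      ((m * ∑ l ∈ range i, (m + 1) ^ l : ℕ) : ZMod (t * m)) := by
    rw [ZMod.natCast_eq_natCast_iff, mul_comm t]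
    exact (Nat.mod_modEq _ t).mul_left' m
  rw [← Nat.cast_pow, ← geom_sum_mul_add]
  push_cast at hmod ⊢
  rw [hmod]
  ring

theorem natCast_succ_pow_mem_image (t m i : ℕ) (ht : 0 < t) :
    ((m + 1 : ℕ) : ZMod (t * m)) ^ i ∈
      (range t).image fun k : ℕ => 1 + m * (k : ZMod (t * m)) :=
  mem_image.2 ⟨_, mem_range.2 (Nat.mod_lt _ ht), (natCast_succ_pow_eq_one_add_mul t m i).symm⟩

theorem natCast_succ_pow_eq_one_iff (t m u : ℕ) (hm : 0 < m) :
    ((m + 1 : ℕ) : ZMod (t * m)) ^ u = 1 ↔ t ∣ ∑ i ∈ range u, (m + 1) ^ i := by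
  rw [← Nat.cast_pow, ← geom_sum_mul_add, Nat.cast_add, Nat.cast_one, add_eq_right,
    ZMod.natCast_eq_zero_iff, Nat.mul_dvd_mul_iff_right hm]

theorem stmt_17_general (j t : ℕ) (hj : 2 ≤ j) (ht : 1 ≤ t)
    (M : ℕ) (hM : M = orderOf ((j : ZMod (t * (j - 1))))) :
    M ≤ t ∧ ∀ u : ℕ, 1 ≤ u →
      ((t ∣ (Finset.range u).sum fun i => j ^ i) ↔ M ∣ u) := by
  obtain ⟨m, rfl⟩ : ∃ m, j = m + 1 := ⟨j - 1, by omega⟩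
  rw [Nat.add_sub_cancel] at hM
  subst hM
  refine ⟨?_, fun u _ => ?_⟩
  · calc _ ≤ _ := orderOf_le_card_of_forall_pow_mem (natCast_succ_pow_mem_image t m · ht)
      _ ≤ #(range t) := card_image_le
      _ = t := card_range t
  · rw [orderOf_dvd_iff_pow_eq_one, natCast_succ_pow_eq_one_iff t m u (by omega)]

/-- Arithmetic claims from the proofs of Theorem 1.3/1.4 and Proposition 9.1 of the
paper: for j ≥ 2 coprime to t, the order M of j modulo t(j−1) satisfies M ≤ t, and
t ∣ 1 + j + ⋯ + j^{u−1} iff M ∣ u. -/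
theorem stmt_17 (j t : ℕ) (hj : 2 ≤ j) (ht : 1 ≤ t) (hco : Nat.Coprime j t)
    (M : ℕ) (hM : M = orderOf ((j : ZMod (t * (j - 1))))) :
    M ≤ t ∧ ∀ u : ℕ, 1 ≤ u →
      ((t ∣ (Finset.range u).sum fun i => j ^ i) ↔ M ∣ u) :=
  stmt_17_general j t hj ht M hM
end

section
/- For every natural number d, in ℤ one has 6 * Polynomial.eval 2 (Polynomial.derivative (Polynomial.derivative (Polynomial.dickson 1 1 d))) = (d : ℤ)^4 − (d : ℤ)^2. That is, the second derivative of the monic Chebyshev polynomial T_d evaluated at 2 equals (d^4 − d^2)/6. -/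
/-!
The monic Chebyshev polynomial is a rescaling of the classical one, `C_n(2x) = 2 T_n(x)`, so
`4 C_n''(2) = 2 T_n''(1)`. At `x = 1` the Chebyshev differential equation
`(1 - x²) T_n'' = x T_n' - n² T_n`, differentiated once, gives `3 T_n''(1) = n² (n² - 1)`.
-/

open Polynomial

theorem Polynomial.iterate_derivative_comp_C_mul_X {R : Type*} [CommSemiring R] (p : R[X])
    (a : R) (k : ℕ) :
    derivative^[k] (p.comp (C a * X)) = C a ^ k * (derivative^[k] p).comp (C a * X) := by
  induction k generalizing p with
  | zero => simp
  | succ k ih =>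
    rw [Function.iterate_succ_apply, Function.iterate_succ_apply, derivative_comp,
      derivative_C_mul_X, iterate_derivative_C_mul, ih, pow_succ', mul_assoc]

namespace Polynomial.Chebyshev

theorem two_pow_mul_iterate_derivative_C_eval_two {R : Type*} [CommRing R] (n : ℤ) (k : ℕ) :
    2 ^ k * (derivative^[k] (C R n)).eval 2 = 2 * (derivative^[k] (T R n)).eval 1 := by
  have h := congrArg (fun p => (derivative^[k] p).eval 1) (C_comp_two_mul_X (R := R) n)
  simpa only [← C_ofNat, iterate_derivative_comp_C_mul_X, iterate_derivative_C_mul, eval_mul,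
    eval_pow, eval_C, eval_comp, eval_X, mul_one] using h

theorem six_mul_derivative_derivative_C_eval_two (n : ℤ) :
    6 * (derivative (derivative (C ℤ n))).eval 2 = n ^ 4 - n ^ 2 := by
  have hC := two_pow_mul_iterate_derivative_C_eval_two (R := ℤ) n 2
  have hT := iterate_derivative_T_eval_one (R := ℤ) n 2
  simp only [Function.iterate_succ_apply, Function.iterate_zero_apply, Finset.prod_range_succ,
    Finset.prod_range_zero] at hC hT
  push_cast at hT
  linarith

end Polynomial.Chebyshev

/-- The identity T_d''(2) = (d⁴ − d²)/6 for the monic Chebyshev polynomial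
T_d = dickson 1 1 d, used in the proof of Theorem 1.6 ('mainpoly') of the paper. -/
theorem stmt_18 (d : ℕ) :
    6 * Polynomial.eval 2
        (Polynomial.derivative (Polynomial.derivative (Polynomial.dickson 1 (1 : ℤ) d))) =
      (d : ℤ) ^ 4 - (d : ℤ) ^ 2 := by
  rw [dickson_one_one_eq_chebyshev_C, Chebyshev.six_mul_derivative_derivative_C_eval_two]
end

section
/- Let C ∈ ℂ with C ≠ 0 and let f, g, h ∈ ℂ[X] be nonzero polynomials satisfying (Polynomial.X − Polynomial.C C) * f^2 − Polynomial.C C * g^2 = h^2. Let φ := algebraMap ℂ[X] (RatFunc ℂ) ((Polynomial.X − Polynomial.C C) * f^2) / algebraMap ℂ[X] (RatFunc ℂ) (g^2), assume φ is nonconstant (max(φ.num.natDegree, φ.denom.natDegree) ≥ 1), and let Φ : ℕ → RatFunc ℂ be the iterate sequence of φ. Then there exists τ ∈ RatFunc ℂ with Φ 2 = τ^2. -/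
/-- The remark after Corollary 1.8 of the paper: a map of the exceptional form
φ(x) = (x−C)f(x)²/g(x)² with (x−C)f(x)² − C·g(x)² = h(x)² has φ² a square in ℂ(x). -/
theorem stmt_19 (C : ℂ) (hC : C ≠ 0)
    (f g h : Polynomial ℂ) (hf : f ≠ 0) (hg : g ≠ 0) (hh : h ≠ 0)
    (heq : (Polynomial.X - Polynomial.C C) * f ^ 2 - Polynomial.C C * g ^ 2 = h ^ 2)
    (φ : RatFunc ℂ)
    (hφ : φ = algebraMap (Polynomial ℂ) (RatFunc ℂ)
        ((Polynomial.X - Polynomial.C C) * f ^ 2) /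
      algebraMap (Polynomial ℂ) (RatFunc ℂ) (g ^ 2))
    (hdeg : 1 ≤ max φ.num.natDegree φ.denom.natDegree)
    (Φ : ℕ → RatFunc ℂ)
    (hΦ0 : Φ 0 = RatFunc.X)
    (hΦ : ∀ n, Φ (n + 1) =
      Polynomial.aeval (Φ n) φ.num / Polynomial.aeval (Φ n) φ.denom) :
    ∃ τ : RatFunc ℂ, Φ 2 = τ ^ 2 := by
  set A : RatFunc ℂ := algebraMap (Polynomial ℂ) (RatFunc ℂ)
      ((Polynomial.X - Polynomial.C C) * f ^ 2) with hA
  set c0 : RatFunc ℂ := algebraMap ℂ (RatFunc ℂ) C with hc0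
  have hGne : algebraMap (Polynomial ℂ) (RatFunc ℂ) (g ^ 2) ≠ 0 :=
    RatFunc.algebraMap_ne_zero (pow_ne_zero 2 hg)
  have hgne : algebraMap (Polynomial ℂ) (RatFunc ℂ) g ≠ 0 :=
    RatFunc.algebraMap_ne_zero hg
  have hdenne : algebraMap (Polynomial ℂ) (RatFunc ℂ) φ.denom ≠ 0 :=
    RatFunc.algebraMap_ne_zero φ.denom_ne_zero
  -- φ is transcendental over ℂ (otherwise it would be constant, contradicting hdeg)
  have hT : ∀ p : Polynomial ℂ, p ≠ 0 → Polynomial.aeval φ p ≠ 0 := by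
    intro p hp hpz
    have halg : IsAlgebraic ℂ φ := ⟨p, hp, hpz⟩
    have hint : IsIntegral ℂ φ := halg.isIntegral
    have hdeg1 : (minpoly ℂ φ).degree = 1 :=
      IsAlgClosed.degree_eq_one_of_irreducible ℂ (minpoly.irreducible hint)
    obtain ⟨c, hc⟩ := minpoly.mem_range_of_degree_eq_one ℂ φ hdeg1
    have hnum : φ.num.natDegree = 0 := by
      rw [← hc, RatFunc.algebraMap_eq_C, RatFunc.num_C, Polynomial.natDegree_C]
    have hden : φ.denom.natDegree = 0 := by
      rw [← hc, RatFunc.algebraMap_eq_C, RatFunc.denom_C, Polynomial.natDegree_one]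
    rw [hnum, hden] at hdeg
    omega
  have hfφ : Polynomial.aeval φ f ≠ 0 := hT f hf
  have hgφ : Polynomial.aeval φ g ≠ 0 := hT g hg
  have hdφ : Polynomial.aeval φ φ.denom ≠ 0 := hT φ.denom φ.denom_ne_zero
  -- Step 1: Φ 1 = φ
  have haevalX : ∀ p : Polynomial ℂ,
      Polynomial.aeval (RatFunc.X) p = algebraMap (Polynomial ℂ) (RatFunc ℂ) p := by
    intro p
    rw [← RatFunc.algebraMap_X]
    have := Polynomial.aeval_algHom_apply
      (IsScalarTower.toAlgHom ℂ (Polynomial ℂ) (RatFunc ℂ)) Polynomial.X p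
    simpa [Polynomial.aeval_X_left_apply] using this
  have hΦ1 : Φ 1 = φ := by
    rw [hΦ 0, hΦ0, haevalX, haevalX, RatFunc.num_div_denom]
  -- Step 2: cross identity for num/denom as polynomials
  have h1 : algebraMap (Polynomial ℂ) (RatFunc ℂ) φ.num
      / algebraMap (Polynomial ℂ) (RatFunc ℂ) φ.denom
      = A / algebraMap (Polynomial ℂ) (RatFunc ℂ) (g ^ 2) := by
    rw [RatFunc.num_div_denom, hφ]
  have hcross := (div_eq_div_iff hdenne hGne).mp h1
  have keyP : φ.num * g ^ 2 = (Polynomial.X - Polynomial.C C) * f ^ 2 * φ.denom := by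
    apply IsFractionRing.injective (Polynomial ℂ) (RatFunc ℂ)
    rw [map_mul, map_mul]
    exact hcross
  -- apply aeval φ to keyP
  have key2 : Polynomial.aeval φ φ.num * (Polynomial.aeval φ g) ^ 2
      = (φ - c0) * (Polynomial.aeval φ f) ^ 2 * Polynomial.aeval φ φ.denom := by
    have := congrArg (Polynomial.aeval φ) keyP
    simpa [map_mul, map_pow, map_sub, Polynomial.aeval_X, Polynomial.aeval_C, hc0]
      using this
  -- (φ - C) * g(x)^2 = h(x)^2 in RatFunc ℂ
  have hφG : φ * algebraMap (Polynomial ℂ) (RatFunc ℂ) (g ^ 2) = A := by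
    rw [hφ, div_mul_cancel₀ _ hGne]
  have hmap : A - c0 * algebraMap (Polynomial ℂ) (RatFunc ℂ) (g ^ 2)
      = (algebraMap (Polynomial ℂ) (RatFunc ℂ) h) ^ 2 := by
    have h2 := congrArg (algebraMap (Polynomial ℂ) (RatFunc ℂ)) heq
    simp only [map_sub, map_mul, map_pow, RatFunc.algebraMap_C] at h2
    simp only [hA, map_sub, map_mul, map_pow, RatFunc.algebraMap_C, hc0,
      RatFunc.algebraMap_eq_C]
    linear_combination h2
  have hsub : (φ - c0) * (algebraMap (Polynomial ℂ) (RatFunc ℂ) g) ^ 2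
      = (algebraMap (Polynomial ℂ) (RatFunc ℂ) h) ^ 2 := by
    have hg2 : (algebraMap (Polynomial ℂ) (RatFunc ℂ) g) ^ 2
        = algebraMap (Polynomial ℂ) (RatFunc ℂ) (g ^ 2) := (map_pow _ _ _).symm
    rw [hg2, sub_mul, hφG, ← hmap]
  -- conclude
  refine ⟨(algebraMap (Polynomial ℂ) (RatFunc ℂ) h / algebraMap (Polynomial ℂ) (RatFunc ℂ) g)
    * (Polynomial.aeval φ f / Polynomial.aeval φ g), ?_⟩
  rw [hΦ 1, hΦ1]
  field_simp
  linear_combination ((algebraMap (Polynomial ℂ) (RatFunc ℂ) g) ^ 2) * key2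
    + ((Polynomial.aeval φ f) ^ 2 * Polynomial.aeval φ φ.denom) * hsub
end
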